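/- arXiv:2303.16087 — 8 statements merged into one kernel-verified Lean document; each statement's English description precedes it below -/
import Mathlib

section
/- Let G = (V, E) be an edge-labeled DAG with labels c : E → ℝ and let j ∈ V be an intermediate vertex (having at least one predecessor and at least one successor). Let G − j denote the graph obtained by vertex elimination of j: its vertex set is V ∖ {j}; for every predecessor i of j and every successor k of j, the label of edge (i,k) becomes c(i,k) + c(j,k)·c(i,j) if (i,k) ∈ E, and otherwise the fill edge (i,k) with label c(j,k)·c(i,j) is inserted; all edges incident to j are removed and all other edges keep their labels. Then for all vertices s, t ∈ V ∖ {j}, the path sums agree: J_{G−j}(s, t) = J_G(s, t). -/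
open scoped Classical

/-- A path from `s` to `t`: a nonempty sequence of consecutive edges, recorded as the
list of its vertices (at least two of them, consecutive ones related by `R`). -/
def IsPath {α : Type*} (R : α → α → Prop) (s t : α) (p : List α) : Prop :=
  2 ≤ p.length ∧ p.Chain' R ∧ p.head? = some s ∧ p.getLast? = some t

/-- The path sum `J_G(s,t)`: the sum over all paths from `s` to `t` of the product of
the edge labels along the path (an empty sum is `0`; in a finite dag there are only
finitely many paths, so the `tsum` is an honest finite sum). -/
noncomputable def pathSum {α : Type*} (R : α → α → Prop) (c : α → α → ℝ) (s t : α) : ℝ :=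
  ∑' p : {p : List α // IsPath R s t p},
    ((p.1.zip p.1.tail).map (fun e => c e.1 e.2)).prod

/-- Adjacency of the graph `G − j` obtained by vertex elimination of `j`:
the vertex `j` is isolated (removed), all other edges are kept, and for every
predecessor `i` and successor `k` of `j` the (possibly fill) edge `(i,k)` is present. -/
def elimAdj {V : Type*} [DecidableEq V] (A : V → V → Bool) (j : V) : V → V → Bool :=
  fun x y => !decide (x = j) && !decide (y = j) && (A x y || (A x j && A j y))

/-- Labels of `G − j`: for a predecessor `i` and successor `k` of `j`, the label of
`(i,k)` becomes `c i k + c j k * c i j` if `(i,k)` was an edge and `c j k * c i j`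
otherwise (fill); all other edges keep their labels. -/
noncomputable def elimLab {V : Type*} [DecidableEq V] (A : V → V → Bool)
    (c : V → V → ℝ) (j : V) : V → V → ℝ :=
  fun x y =>
    if A x j ∧ A j y then
      (if A x y then c x y + c j y * c x j else c j y * c x j)
    else c x y

/-!
Splitting a path at its first edge gives the first-step equations
`J(s,t) = E(s,t) + ∑ m, E(s,m) J(m,t)`, where `E` is the weighted adjacency matrix; on an
acyclic graph the path sums are their unique solution, by well-founded induction along the edges.
Eliminating `j` replaces `E(a,b)` by `E(a,b) + E(a,j) E(j,b)` away from `j`, and substituting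
the equation at `j` into the others shows that the path sums of `G` solve the first-step equations
of `G − j` at every vertex other than `j`.
-/

open Finset

section PathSum

variable {V : Type*} {R : V → V → Prop}

noncomputable def pathWeight (c : V → V → ℝ) (p : List V) : ℝ :=
  ((p.zip p.tail).map fun e => c e.1 e.2).prod

noncomputable def edgeWeight (R : V → V → Prop) (c : V → V → ℝ) (a b : V) : ℝ :=
  if R a b then c a b else 0

lemma edgeWeight_of_not {c : V → V → ℝ} {a b : V} (h : ¬R a b) : edgeWeight R c a b = 0 :=
  if_neg h

lemma edgeWeight_self {β : Type*} [Preorder β] {f : V → β} (hf : ∀ a b, R a b → f a < f b)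
    (c : V → V → ℝ) (a : V) : edgeWeight R c a a = 0 :=
  edgeWeight_of_not fun h => lt_irrefl _ (hf a a h)

lemma List.IsChain.nodup_of_lt {β : Type*} [Preorder β] {f : V → β}
    (hf : ∀ a b, R a b → f a < f b) {p : List V} (hp : p.IsChain R) : p.Nodup :=
  .of_map f (((List.isChain_map f).2 (hp.imp hf)).pairwise.imp ne_of_lt)

lemma finite_setOf_isPath [Fintype V] {β : Type*} [Preorder β] {f : V → β}
    (hf : ∀ a b, R a b → f a < f b) (s t : V) : {p | IsPath R s t p}.Finite :=
  (List.finite_length_le V (Fintype.card V)).subset fun _ hp =>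
    (hp.2.1.nodup_of_lt hf).length_le_card

lemma pathSum_eq_sum_of_mem_iff {s t : V} (c : V → V → ℝ) {P : Finset (List V)}
    (hP : ∀ p, p ∈ P ↔ IsPath R s t p) : pathSum R c s t = ∑ p ∈ P, pathWeight c p := by
  rw [← Finset.tsum_subtype' P (pathWeight c)]
  exact tsum_congr_set_coe (pathWeight c) (Set.ext hP).symm

lemma isPath_iff {s t : V} {p : List V} :
    IsPath R s t p ↔ 2 ≤ p.length ∧ p.IsChain R ∧ p.head? = some s ∧ p.getLast? = some t :=
  Iff.rfl

lemma IsPath.pathWeight_cons {s t : V} {q : List V} (hq : IsPath R s t q) (c : V → V → ℝ) (a : V) :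
    pathWeight c (a :: q) = c a s * pathWeight c q := by
  obtain ⟨-, -, hs, -⟩ := hq
  match q, hs with
  | _ :: _, rfl => simp [pathWeight]

lemma isPath_cons_iff {s t a : V} {q : List V} :
    IsPath R s t (a :: q) ↔ a = s ∧ (R s t ∧ q = [t] ∨ ∃ m, R s m ∧ IsPath R m t q) := by
  match q with
  | [] => simp [isPath_iff]
  | [b] => simp [isPath_iff]; grind
  | b :: b' :: r =>
    simp only [isPath_iff, List.isChain_cons_cons, List.head?_cons, List.getLast?_cons_cons,
      List.length_cons, Option.some.injEq]
    constructor
    · rintro ⟨-, ⟨h, hc⟩, rfl, hl⟩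
      exact ⟨rfl, .inr ⟨b, h, by simp, hc, rfl, hl⟩⟩
    · rintro ⟨rfl, ⟨-, h⟩ | ⟨m, h, -, hc, rfl, hl⟩⟩
      · simp at h
      · exact ⟨by simp, ⟨h, hc⟩, rfl, hl⟩

lemma pathSum_eq_edgeWeight_add_sum [Fintype V] {β : Type*} [Preorder β] {f : V → β}
    (hf : ∀ a b, R a b → f a < f b) (c : V → V → ℝ) (s t : V) :
    pathSum R c s t = edgeWeight R c s t + ∑ m, edgeWeight R c s m * pathSum R c m t := by
  obtain ⟨P, hP⟩ : ∃ P : V → Finset (List V), ∀ a p, p ∈ P a ↔ IsPath R a t p :=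
    ⟨fun a => (finite_setOf_isPath hf a t).toFinset, fun _ _ => Set.Finite.mem_toFinset _⟩
  have hPs : P s = (if R s t then {[s, t]} else ∅) ∪
      (univ.filter (R s)).biUnion fun m => (P m).map ⟨(s :: ·), List.cons_injective⟩ := by
    ext (_ | ⟨a, q⟩)
    · split_ifs <;> simp [hP, isPath_iff]
    · split_ifs <;> simp [hP, isPath_cons_iff] <;> tauto
  simp only [pathSum_eq_sum_of_mem_iff c (hP _)]
  rw [hPs, sum_union, sum_biUnion]
  · congr 1
    · split_ifs <;> simp [edgeWeight, *, pathWeight]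
    · rw [sum_filter]
      refine sum_congr rfl fun m _ => ?_
      rw [edgeWeight]
      split_ifs
      · simp only [sum_map, mul_sum]
        refine sum_congr rfl fun q hq => ?_
        exact ((hP m q).1 hq).pathWeight_cons c s
      · simp
  · intro m _ m' _ hne
    simp only [Function.onFun, disjoint_left, mem_map, Function.Embedding.coeFn_mk]
    rintro _ ⟨q, hq, rfl⟩ ⟨q', hq', h⟩
    obtain rfl := List.cons_injective h
    exact hne (Option.some.inj (((hP m _).1 hq).2.2.1.symm.trans ((hP m' _).1 hq').2.2.1))
  · split_ifs <;> simp [disjoint_left, hP, isPath_iff]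

lemma wellFounded_flip_of_lt [Finite V] {β : Type*} [Preorder β] {f : V → β}
    (hf : ∀ a b, R a b → f a < f b) : WellFounded (flip R) :=
  haveI : IsTrans V (fun a b => f b < f a) := ⟨fun _ _ _ hab hbc => hbc.trans hab⟩
  haveI : Std.Irrefl (fun a b : V => f b < f a) := ⟨fun a => lt_irrefl (f a)⟩
  Subrelation.wf (fun h => hf _ _ h) (Finite.wellFounded_of_trans_of_irrefl _)

lemma eq_pathSum_of_eq_edgeWeight_add_sum [Fintype V] {β : Type*} [Preorder β] {f : V → β}
    (hf : ∀ a b, R a b → f a < f b) {c : V → V → ℝ} {t : V} {S : Set V}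
    (hS : ∀ a ∈ S, ∀ b, R a b → b ∈ S) {x : V → ℝ}
    (hx : ∀ a ∈ S, x a = edgeWeight R c a t + ∑ m, edgeWeight R c a m * x m) :
    ∀ s ∈ S, x s = pathSum R c s t := by
  intro s
  induction s using (wellFounded_flip_of_lt hf).induction with
  | _ s ih =>
  intro hs
  rw [hx s hs, pathSum_eq_edgeWeight_add_sum hf]
  congr 1
  refine sum_congr rfl fun m _ => ?_
  by_cases hm : R s m
  · rw [ih m hm (hS s hs m hm)]
  · simp [edgeWeight_of_not hm]

end PathSum

section Elimination

variable {V : Type*} [DecidableEq V]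

def elimWeight (E : V → V → ℝ) (j a b : V) : ℝ :=
  if a = j ∨ b = j then 0 else E a b + E a j * E j b

lemma elimWeight_add_sum [Fintype V] {E : V → V → ℝ} {x : V → ℝ} {j s t : V} (hs : s ≠ j)
    (ht : t ≠ j) (hjj : E j j = 0) (hx : x j = E j t + ∑ m, E j m * x m) :
    elimWeight E j s t + ∑ m, elimWeight E j s m * x m = E s t + ∑ m, E s m * x m := by
  have hpt : ∀ m, elimWeight E j s m = E s m + E s j * E j m - if m = j then E s j else 0 := by
    intro m
    by_cases hm : m = j <;> simp [elimWeight, hs, hm, hjj]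
  simp_rw [hpt, sub_mul, add_mul, sum_sub_distrib, sum_add_distrib, ite_mul, zero_mul,
    sum_ite_eq', mem_univ, if_true, mul_assoc, ← mul_sum, if_neg ht]
  linear_combination -E s j * hx

lemma edgeWeight_elimAdj (A : V → V → Bool) (c : V → V → ℝ) (j : V) :
    edgeWeight (fun a b => elimAdj A j a b = true) (elimLab A c j)
      = elimWeight (edgeWeight (fun a b => A a b = true) c) j := by
  ext a b
  by_cases ha : a = j
  · simp [edgeWeight, elimWeight, elimAdj, ha]
  by_cases hb : b = j
  · simp [edgeWeight, elimWeight, elimAdj, hb]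
  cases hab : A a b <;> cases haj : A a j <;> cases hjb : A j b <;>
    simp [edgeWeight, elimWeight, elimAdj, elimLab, ha, hb, hab, haj, hjb] <;> ring

lemma elimAdj_lt {β : Type*} [Preorder β] {A : V → V → Bool} {f : V → β}
    (hf : ∀ a b, A a b = true → f a < f b) (j : V) :
    ∀ a b, elimAdj A j a b = true → f a < f b := by
  intro a b h
  simp only [elimAdj, Bool.and_eq_true, Bool.or_eq_true] at h
  rcases h.2 with h | ⟨haj, hjb⟩
  · exact hf a b h
  · exact (hf a j haj).trans (hf j b hjb)

lemma ne_of_elimAdj {A : V → V → Bool} {j a b : V} (h : elimAdj A j a b = true) : b ≠ j := by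
  simp_all [elimAdj]

end Elimination

theorem vertex_elimination_preserves_path_sums_general
    {V : Type*} [Fintype V] [DecidableEq V]
    (A : V → V → Bool) (c : V → V → ℝ)
    (f : V → ℕ) (hacyc : ∀ i j, A i j = true → f i < f j)
    (j : V) :
    ∀ s t : V, s ≠ j → t ≠ j →
      pathSum (fun a b => elimAdj A j a b = true) (elimLab A c j) s t
        = pathSum (fun a b => A a b = true) c s t := by
  intro s t hs ht
  symm
  apply eq_pathSum_of_eq_edgeWeight_add_sum (elimAdj_lt hacyc j) (S := {j}ᶜ)
    (fun _ _ _ => ne_of_elimAdj) _ s hs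
  intro a ha
  rw [edgeWeight_elimAdj, elimWeight_add_sum ha ht (edgeWeight_self hacyc c j)
    (pathSum_eq_edgeWeight_add_sum hacyc c j t), ← pathSum_eq_edgeWeight_add_sum hacyc]

/-- **Vertex elimination preserves path sums**: for an edge-labeled dag `G` and an
intermediate vertex `j`, for all vertices `s, t ≠ j` we have
`J_{G−j}(s,t) = J_G(s,t)`. -/
theorem vertex_elimination_preserves_path_sums
    {V : Type*} [Fintype V] [DecidableEq V]
    (A : V → V → Bool) (c : V → V → ℝ)
    (f : V → ℕ) (hacyc : ∀ i j, A i j = true → f i < f j)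
    (j : V) (hpred : ∃ i, A i j = true) (hsucc : ∃ k, A j k = true) :
    ∀ s t : V, s ≠ j → t ≠ j →
      pathSum (fun a b => elimAdj A j a b = true) (elimLab A c j) s t
        = pathSum (fun a b => A a b = true) c s t :=
  vertex_elimination_preserves_path_sums_general A c f hacyc j
end

section
/- Let G = (V, E) be an edge-labeled DAG with labels c : E → ℝ and let (i,j) ∈ E be an edge whose target j is not a sink. Let G' be obtained by front elimination of (i,j): for every successor k of j, the label of edge (i,k) becomes c(i,k) + c(j,k)·c(i,j) if (i,k) ∈ E and otherwise the fill edge (i,k) with label c(j,k)·c(i,j) is inserted; the edge (i,j) is removed; and if j thereby has no remaining incoming edges, j is removed together with all its outgoing edges. Then for every source s and sink t of G, the path sums agree: J_{G'}(s, t) = J_G(s, t). -/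
open scoped Classical

/-- Adjacency after front elimination of the edge `(i,j)`: for every successor `k` of
`j` the (possibly fill) edge `(i,k)` is inserted, the edge `(i,j)` is removed, and if
`j` thereby has no incoming edges left, `j` is removed (isolated) together with its
outgoing edges. -/
def frontAdj {V : Type*} [Fintype V] [DecidableEq V] (A : V → V → Bool) (i j : V) :
    V → V → Bool :=
  fun x y =>
    let A1 : V → V → Bool := fun x y =>
      if x = i ∧ y = j then false else (A x y || (decide (x = i) && A j y))
    if ∀ u, u ≠ i → A u j = false then
      (A1 x y && !decide (x = j) && !decide (y = j))
    else A1 x y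

/-- Labels after front elimination of `(i,j)`: for every successor `k` of `j` the
label of `(i,k)` becomes `c i k + c j k * c i j` if `(i,k)` was an edge and
`c j k * c i j` for a fill edge; all other edges keep their labels. -/
noncomputable def frontLab {V : Type*} [DecidableEq V] (A : V → V → Bool)
    (c : V → V → ℝ) (i j : V) : V → V → ℝ :=
  fun x y =>
    if x = i ∧ A j y then
      (if A x y then c x y + c j y * c x j else c j y * c x j)
    else c x y

/-!
Encode a labeled DAG by its weighted adjacency matrix `M`. Acyclicity makes `M` nilpotent, and
`(Mⁿ)ₛₜ` sums the values of the paths with `n` edges, so the path sums are the entries of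
`(1 - M)⁻¹ - 1`. Before `j` is pruned, front elimination of `(i,j)` turns `M` into
`M - E + E M` with `E = c(i,j) eᵢ eⱼᵀ`, and `1 - (M - E + E M) = (1 + E)(1 - M)`. Since `E² = 0`,
the new inverse is `(1 - M)⁻¹ (1 - E)`, which differs from `(1 - M)⁻¹` only in column `j`, and
the sink `t` is not `j`. Pruning `j` once it has no incoming edges left only deletes paths
through `j`, and no path from a source other than `j` passes through it.
-/

open Finset

section ListWeight

variable {V S : Type*}

def listWeight [Monoid S] (c : Matrix V V S) (p : List V) : S :=
  ((p.zip p.tail).map fun e => c e.1 e.2).prod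

@[simp]
lemma listWeight_nil [Monoid S] (c : Matrix V V S) : listWeight c [] = 1 := rfl

@[simp]
lemma listWeight_singleton [Monoid S] (c : Matrix V V S) (a : V) : listWeight c [a] = 1 := rfl

@[simp]
lemma listWeight_cons_cons [Monoid S] (c : Matrix V V S) (a b : V) (l : List V) :
    listWeight c (a :: b :: l) = c a b * listWeight c (b :: l) := by
  simp [listWeight]

lemma Matrix.pow_succ_apply_eq_sum_listWeight [Fintype V] [DecidableEq V] [Semiring S]
    (W : Matrix V V S) (n : ℕ) (s t : V) :
    (W ^ (n + 1)) s t = ∑ v : Fin n → V, listWeight W (s :: List.ofFn v ++ [t]) := by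
  induction n generalizing s with
  | zero => simp
  | succ n ih =>
    rw [pow_succ', Matrix.mul_apply, ← (Fin.consEquiv fun _ => V).sum_comp,
      Fintype.sum_prod_type]
    refine sum_congr rfl fun u _ => ?_
    simp [ih, mul_sum, Fin.consEquiv, List.ofFn_succ]

end ListWeight

section IsPath

variable {V : Type*} {R : V → V → Prop} {s t : V}

lemma IsPath.isChain {p : List V} (hp : IsPath R s t p) : p.IsChain R :=
  hp.2.1

lemma IsPath.exists_eq_cons_append {p : List V} (hp : IsPath R s t p) :
    ∃ q, s :: q ++ [t] = p := by
  obtain ⟨hlen, -, hs, ht⟩ := hp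
  obtain ⟨_ | ⟨a, q⟩, rfl⟩ := List.getLast?_eq_some_iff.mp ht
  · simp at hlen
  · obtain rfl : a = s := by simpa using hs
    exact ⟨q, rfl⟩

lemma isPath_cons_append_iff {q : List V} :
    IsPath R s t (s :: q ++ [t]) ↔ (s :: q ++ [t]).IsChain R :=
  ⟨IsPath.isChain, fun h => ⟨by simp, h, rfl, List.getLast?_concat⟩⟩

end IsPath

lemma List.IsChain.length_le_card {V : Type*} [Fintype V] {R : V → V → Prop} {f : V → ℕ}
    (hR : ∀ a b, R a b → f a < f b) {p : List V} (hp : p.IsChain R) :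
    p.length ≤ Fintype.card V := by
  have hlt : (p.map f).IsChain (· < ·) := List.isChain_map_of_isChain f hR hp
  exact (List.Nodup.of_map f (List.isChain_iff_pairwise.mp hlt).nodup).length_le_card

section WeightMatrix

variable {V S : Type*}

noncomputable def weightMatrix [Zero S] (R : V → V → Prop) (c : V → V → S) : Matrix V V S :=
  Matrix.of fun x y => if R x y then c x y else 0

lemma listWeight_weightMatrix [MonoidWithZero S] (R : V → V → Prop) (c : V → V → S) :
    ∀ p : List V,
      listWeight (weightMatrix R c) p = if p.IsChain R then listWeight (.of c) p else 0
  | [] => by simp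
  | [a] => by simp
  | a :: b :: l => by
    simp only [listWeight_cons_cons, listWeight_weightMatrix R c (b :: l),
      List.isChain_cons_cons]
    by_cases hab : R a b <;> by_cases hl : (b :: l).IsChain R <;> simp [weightMatrix, hab, hl]

variable [Fintype V] {R : V → V → Prop} {f : V → ℕ}

lemma listWeight_weightMatrix_eq_zero_of_card_lt [MonoidWithZero S]
    (hR : ∀ a b, R a b → f a < f b) (c : V → V → S) {p : List V}
    (hp : Fintype.card V < p.length) : listWeight (weightMatrix R c) p = 0 := by
  rw [listWeight_weightMatrix, if_neg fun h => (h.length_le_card hR).not_gt hp]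

variable [DecidableEq V]

lemma weightMatrix_pow_card_succ_eq_zero [Semiring S] (hR : ∀ a b, R a b → f a < f b)
    (c : V → V → S) : weightMatrix R c ^ (Fintype.card V + 1) = 0 := by
  ext s t
  rw [Matrix.pow_succ_apply_eq_sum_listWeight]
  exact sum_eq_zero fun v _ => listWeight_weightMatrix_eq_zero_of_card_lt hR c (by simp)

lemma inv_one_sub_weightMatrix [CommRing S] (hR : ∀ a b, R a b → f a < f b) (c : V → V → S) :
    (1 - weightMatrix R c)⁻¹ = ∑ n ∈ range (Fintype.card V + 1), weightMatrix R c ^ n :=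
  Matrix.inv_eq_right_inv <| by
    rw [mul_neg_geom_sum, weightMatrix_pow_card_succ_eq_zero hR, sub_zero]

lemma pathSum_eq_sum_weightMatrix_pow (hR : ∀ a b, R a b → f a < f b) (c : V → V → ℝ)
    (s t : V) :
    pathSum R c s t = ∑ n ∈ range (Fintype.card V), (weightMatrix R c ^ (n + 1)) s t := by
  set W := weightMatrix R c
  set F : List V → ℝ := {p | IsPath R s t p}.indicator (listWeight W)
  have hinj : Function.Injective fun q : List V => s :: q ++ [t] := fun q q' h => by
    simpa using h
  have hF : ∀ q, F (s :: q ++ [t]) = listWeight W (s :: q ++ [t]) := fun q => by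
    simp only [F, Set.indicator_apply_eq_self, Set.mem_ofPred_eq, isPath_cons_append_iff]
    intro h
    rw [listWeight_weightMatrix, if_neg h]
  calc pathSum R c s t = ∑' p : {p | IsPath R s t p}, listWeight W p :=
        tsum_congr fun p => by rw [listWeight_weightMatrix, if_pos p.2.isChain]; rfl
    _ = ∑' q, F (s :: q ++ [t]) := by
        rw [_root_.tsum_subtype, hinj.tsum_eq]
        exact Set.support_indicator_subset.trans fun p hp => hp.exists_eq_cons_append
    _ = ∑' x : Σ n, Fin n → V, listWeight W (s :: List.ofFn x.2 ++ [t]) := by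
        simp only [hF]
        exact (List.equivSigmaTuple.symm.tsum_eq fun q => listWeight W (s :: q ++ [t])).symm
    _ = ∑ x ∈ (range (Fintype.card V)).sigma fun n => (univ : Finset (Fin n → V)),
          listWeight W (s :: List.ofFn x.2 ++ [t]) := by
        refine tsum_eq_sum fun x hx => listWeight_weightMatrix_eq_zero_of_card_lt hR c ?_
        simp only [mem_sigma, mem_range, mem_univ, and_true, not_lt] at hx
        simp only [List.length_cons, List.length_append, List.length_ofFn]
        omega
    _ = _ := by
        rw [sum_sigma]
        simp only [Matrix.pow_succ_apply_eq_sum_listWeight]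

lemma pathSum_eq_inv_one_sub_weightMatrix_sub_one (hR : ∀ a b, R a b → f a < f b)
    (c : V → V → ℝ) (s t : V) :
    pathSum R c s t = ((1 - weightMatrix R c)⁻¹ - 1) s t := by
  rw [inv_one_sub_weightMatrix hR, sum_range_succ', pow_zero, add_sub_cancel_right,
    Matrix.sum_apply, pathSum_eq_sum_weightMatrix_pow hR]

end WeightMatrix

section NoEdgesInto

variable {V : Type*} {R : V → V → Prop} {j : V}

lemma isChain_cons_restrict_iff_of_no_edges_into (hj : ∀ x, ¬ R x j) {a : V} (ha : a ≠ j)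
    (l : List V) :
    (a :: l).IsChain (fun x y => R x y ∧ x ≠ j ∧ y ≠ j) ↔ (a :: l).IsChain R := by
  induction l generalizing a with
  | nil => simp
  | cons b l ih =>
    simp only [List.isChain_cons_cons]
    have hb : R a b → b ≠ j := fun hab hb => hj a (hb ▸ hab)
    constructor
    · rintro ⟨⟨hab, -⟩, hl⟩
      exact ⟨hab, (ih (hb hab)).mp hl⟩
    · rintro ⟨hab, hl⟩
      exact ⟨⟨hab, ha, hb hab⟩, (ih (hb hab)).mpr hl⟩

lemma pathSum_restrict_of_no_edges_into (hj : ∀ x, ¬ R x j) {s : V} (hs : s ≠ j)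
    (c : V → V → ℝ) (t : V) :
    pathSum (fun x y => R x y ∧ x ≠ j ∧ y ≠ j) c s t = pathSum R c s t := by
  have hpath : IsPath (fun x y => R x y ∧ x ≠ j ∧ y ≠ j) s t = IsPath R s t := by
    funext p
    refine propext (and_congr_right fun _ => ?_)
    constructor
    · rintro ⟨hc, hh, hl⟩
      obtain ⟨l, rfl⟩ := List.head?_eq_some_iff.mp hh
      exact ⟨(isChain_cons_restrict_iff_of_no_edges_into hj hs l).mp hc, hh, hl⟩
    · rintro ⟨hc, hh, hl⟩
      obtain ⟨l, rfl⟩ := List.head?_eq_some_iff.mp hh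
      exact ⟨(isChain_cons_restrict_iff_of_no_edges_into hj hs l).mpr hc, hh, hl⟩
  rw [pathSum, hpath, pathSum]

end NoEdgesInto

lemma Matrix.inv_one_sub_sub_single_add_single_mul {n S : Type*} [Fintype n] [DecidableEq n]
    [CommRing S] (M : Matrix n n S) {i j : n} (hij : i ≠ j) (a : S) :
    (1 - (M - single i j a + single i j a * M))⁻¹ = (1 - M)⁻¹ * (1 - single i j a) := by
  have hfactor : 1 - (M - single i j a + single i j a * M) = (1 + single i j a) * (1 - M) := by
    noncomm_ring
  have hinv : (1 + single i j a) * (1 - single i j a) = 1 := by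
    rw [add_mul, one_mul, mul_sub, mul_one, single_mul_single_of_ne _ _ _ _ hij.symm]
    abel
  rw [hfactor, Matrix.mul_inv_rev, Matrix.inv_eq_right_inv hinv]

section FrontElimination

variable {V : Type*} [DecidableEq V] (A : V → V → Bool) (i j : V)

def frontAdjUnpruned : V → V → Bool := fun x y =>
  if x = i ∧ y = j then false else (A x y || (decide (x = i) && A j y))

variable {A i j}

lemma frontAdjUnpruned_rank_lt {f : V → ℕ} (hacyc : ∀ a b, A a b = true → f a < f b)
    (hij : A i j = true) (a b : V) (hab : frontAdjUnpruned A i j a b = true) : f a < f b := by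
  by_cases h : a = i ∧ b = j
  · simp [frontAdjUnpruned, h] at hab
  · simp only [frontAdjUnpruned, if_neg h, Bool.or_eq_true, Bool.and_eq_true,
      decide_eq_true_eq] at hab
    rcases hab with hab | ⟨rfl, hjb⟩
    · exact hacyc a b hab
    · exact (hacyc a j hij).trans (hacyc j b hjb)

lemma pathSum_frontAdj [Fintype V] {s : V} (hs : s ≠ j) (lab : V → V → ℝ) (t : V) :
    pathSum (fun a b => frontAdj A i j a b = true) lab s t
      = pathSum (fun a b => frontAdjUnpruned A i j a b = true) lab s t := by
  by_cases hpruned : ∀ u, u ≠ i → A u j = false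
  · have hrel : (fun a b => frontAdj A i j a b = true)
        = fun a b => frontAdjUnpruned A i j a b = true ∧ a ≠ j ∧ b ≠ j := by
      funext a b
      simp only [frontAdj, if_pos hpruned]
      simp [frontAdjUnpruned, and_assoc]
    rw [hrel]
    refine pathSum_restrict_of_no_edges_into (fun x hx => ?_) hs lab t
    by_cases hxi : x = i
    · simp [frontAdjUnpruned, hxi] at hx
    · simp [frontAdjUnpruned, hxi, hpruned x hxi] at hx
  · simp only [frontAdj, if_neg hpruned]
    rfl

lemma weightMatrix_frontAdjUnpruned [Fintype V] (c : V → V → ℝ) (hij : A i j = true)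
    (hjj : A j j = false) (hne : i ≠ j) :
    weightMatrix (fun a b => frontAdjUnpruned A i j a b = true) (frontLab A c i j)
      = weightMatrix (fun a b => A a b = true) c - Matrix.single i j (c i j)
        + Matrix.single i j (c i j) * weightMatrix (fun a b => A a b = true) c := by
  ext x y
  by_cases hx : x = i
  · subst hx
    by_cases hy : y = j
    · subst hy
      simp [Matrix.single_mul_apply_same, weightMatrix, frontAdjUnpruned, frontLab, hij, hjj]
    · by_cases hjy : A j y <;> by_cases hxy : A x y <;>
        simp [Matrix.single_mul_apply_same, weightMatrix, frontAdjUnpruned, frontLab,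
          hjy, hxy, hy, Ne.symm hy] <;> ring
  · simp [Matrix.single_mul_apply_of_ne _ _ _ _ _ hx, weightMatrix, frontAdjUnpruned, frontLab,
      hx, Ne.symm hx]

end FrontElimination

/-- **Front edge elimination preserves source-to-sink path sums**: if `(i,j)` is an
edge of the edge-labeled dag `G` whose target `j` is not a sink, then for every source
`s` and sink `t` of `G`, `J_{G'}(s,t) = J_G(s,t)` where `G'` is obtained from `G` by
front elimination of `(i,j)`. -/
theorem front_elimination_preserves_path_sums
    {V : Type*} [Fintype V] [DecidableEq V]
    (A : V → V → Bool) (c : V → V → ℝ)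
    (f : V → ℕ) (hacyc : ∀ a b, A a b = true → f a < f b)
    (i j : V) (hij : A i j = true) (hnotsink : ∃ k, A j k = true) :
    ∀ s t : V, (∀ u, A u s = false) → (∀ w, A t w = false) →
      pathSum (fun a b => frontAdj A i j a b = true) (frontLab A c i j) s t
        = pathSum (fun a b => A a b = true) c s t := by
  intro s t hs ht
  obtain ⟨k, hjk⟩ := hnotsink
  have hsj : s ≠ j := by rintro rfl; simp [hs i] at hij
  have htj : t ≠ j := by rintro rfl; simp [ht k] at hjk
  have hne : i ≠ j := fun h => (hacyc i j hij).ne (congrArg f h)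
  have hjj : A j j = false := Bool.eq_false_iff.mpr fun h => (hacyc j j h).false
  rw [pathSum_frontAdj hsj, pathSum_eq_inv_one_sub_weightMatrix_sub_one
      (frontAdjUnpruned_rank_lt hacyc hij), weightMatrix_frontAdjUnpruned c hij hjj hne,
    Matrix.inv_one_sub_sub_single_add_single_mul _ hne,
    pathSum_eq_inv_one_sub_weightMatrix_sub_one hacyc]
  simp [Matrix.mul_sub, Matrix.mul_single_apply_of_ne _ _ _ _ _ htj]
end

section
/- Let G = (V, E) be an edge-labeled DAG with labels c : E → ℝ and let j be an intermediate vertex with predecessor set P(j) = {i_1, …, i_p}. Then performing front elimination of the edges (i_1, j), (i_2, j), …, (i_p, j) consecutively (each step applied to the graph produced by the previous step, with the removal of j and its outgoing edges occurring at the last step) produces exactly the graph G − j obtained by vertex elimination of j, with identical vertex set, edge set and edge labels; in particular the result is independent of the order in which the incoming edges of j are eliminated. -/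
/-! Front-eliminating the edges `(i,j)` for the predecessors `i` in a set `S ⊊ P(j)` leaves
`G` with the edges `(i,j)`, `i ∈ S`, replaced by (fill) edges `(i,k)` to the successors `k`
of `j`, labelled exactly as vertex elimination labels row `i`; `j` itself is untouched
because it still has an incoming edge. Each further step adds one predecessor to `S`, and
the last one leaves `j` without incoming edges, so `j` is removed and the graph is `G − j`. -/

open scoped Classical

section PartialVertexElimination

variable {V : Type*} [DecidableEq V]

noncomputable def partialElimAdj (A : V → V → Bool) (j : V) (s : Set V) : V → V → Bool :=
  fun x y => (A x y && !decide (x ∈ s ∧ y = j)) || decide (x ∈ s ∧ A j y = true)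

noncomputable def partialElimLab (A : V → V → Bool) (c : V → V → ℝ) (j : V) (s : Set V) :
    V → V → ℝ :=
  fun x y =>
    if x ∈ s ∧ A j y then
      (if A x y then c x y + c j y * c x j else c j y * c x j)
    else c x y

@[simp]
lemma partialElimAdj_empty (A : V → V → Bool) (j : V) : partialElimAdj A j ∅ = A := by
  funext x y
  simp [partialElimAdj]

omit [DecidableEq V] in
@[simp]
lemma partialElimLab_empty (A : V → V → Bool) (c : V → V → ℝ) (j : V) :
    partialElimLab A c j ∅ = c := by
  funext x y
  simp [partialElimLab]

lemma partialElimLab_setOf_pred (A : V → V → Bool) (c : V → V → ℝ) (j : V) :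
    partialElimLab A c j {u | A u j = true} = elimLab A c j := by
  funext x y
  simp [partialElimLab, elimLab]

lemma partialElimAdj_self_left (A : V → V → Bool) (j : V) (s : Set V) (y : V) :
    partialElimAdj A j s j y = A j y := by
  rw [Bool.eq_iff_iff]
  simp only [partialElimAdj, Bool.or_eq_true, Bool.and_eq_true, Bool.not_eq_true',
    decide_eq_false_iff_not, decide_eq_true_eq]
  grind

lemma frontLab_partialElim {A : V → V → Bool} (c : V → V → ℝ) {i j : V} {s : Set V}
    (hi : i ∉ s) (hj : j ∉ s) :
    frontLab (partialElimAdj A j s) (partialElimLab A c j s) i j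
      = partialElimLab A c j (insert i s) := by
  funext x y
  by_cases hx : x = i
  · subst hx
    simp [frontLab, partialElimLab, partialElimAdj, hi, hj]
  · simp [frontLab, partialElimLab, hx]

variable [Fintype V]

lemma frontAdj_partialElimAdj_of_pred_ne {A : V → V → Bool} {i j k : V} {s : Set V}
    (hjj : A j j = false) (hki : k ≠ i) (hkj : A k j = true) (hks : k ∉ s) :
    frontAdj (partialElimAdj A j s) i j = partialElimAdj A j (insert i s) := by
  have hcond : ¬ ∀ u, u ≠ i → partialElimAdj A j s u j = false := fun h => by
    simpa [partialElimAdj, hkj, hks] using h k hki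
  funext x y
  simp only [frontAdj, if_neg hcond, partialElimAdj_self_left]
  rw [Bool.eq_iff_iff]
  simp only [partialElimAdj, Set.mem_insert_iff, Bool.or_eq_true, Bool.and_eq_true,
    Bool.not_eq_true', decide_eq_false_iff_not, decide_eq_true_eq]
  grind

lemma frontAdj_partialElimAdj_of_last {A : V → V → Bool} {i j : V} {s : Set V}
    (hjj : A j j = false) (hcover : ∀ u, A u j = true ↔ u = i ∨ u ∈ s) :
    frontAdj (partialElimAdj A j s) i j = elimAdj A j := by
  have hcond : ∀ u, u ≠ i → partialElimAdj A j s u j = false := fun u hu => by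
    rw [← Bool.not_eq_true]
    simp only [partialElimAdj, Bool.or_eq_true, Bool.and_eq_true,
      Bool.not_eq_true', decide_eq_false_iff_not, decide_eq_true_eq]
    grind
  funext x y
  simp only [frontAdj, if_pos hcond, partialElimAdj_self_left]
  rw [Bool.eq_iff_iff]
  simp only [partialElimAdj, elimAdj, Bool.or_eq_true, Bool.and_eq_true,
    Bool.not_eq_true', decide_eq_false_iff_not]
  grind

lemma foldl_frontElim_partialElim {A : V → V → Bool} (c : V → V → ℝ) {j : V}
    (hjj : A j j = false) {m : List V} (hm : m ≠ []) (hnd : m.Nodup) {s : Set V}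
    (hdisj : ∀ u ∈ m, u ∉ s) (hcover : ∀ u, A u j = true ↔ u ∈ m ∨ u ∈ s) :
    m.foldl (fun p i => (frontAdj p.1 i j, frontLab p.1 p.2 i j))
        (partialElimAdj A j s, partialElimLab A c j s)
      = (elimAdj A j, elimLab A c j) := by
  induction m generalizing s with
  | nil => exact absurd rfl hm
  | cons i r ih =>
    have hi : i ∉ s := hdisj i List.mem_cons_self
    have hj : j ∉ s := fun h => Bool.false_ne_true (hjj ▸ (hcover j).2 (Or.inr h))
    rw [List.foldl_cons, frontLab_partialElim c hi hj]
    rcases r with _ | ⟨k, r⟩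
    · have hcover' : ∀ u, A u j = true ↔ u = i ∨ u ∈ s := by simpa using hcover
      have hpreds : insert i s = {u | A u j = true} := by ext u; simp [hcover']
      rw [frontAdj_partialElimAdj_of_last hjj hcover', hpreds, partialElimLab_setOf_pred]
      rfl
    · have hki : k ≠ i := fun h => (List.nodup_cons.1 hnd).1 (h ▸ List.mem_cons_self)
      have hks : k ∉ s := hdisj k (List.mem_cons_of_mem _ List.mem_cons_self)
      have hkj : A k j = true := (hcover k).2 (Or.inl (List.mem_cons_of_mem _ List.mem_cons_self))
      rw [frontAdj_partialElimAdj_of_pred_ne hjj hki hkj hks]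
      refine ih (List.cons_ne_nil _ _) (List.nodup_cons.1 hnd).2 (fun u hu => ?_) (fun u => ?_)
      · have hui : u ≠ i := fun h => (List.nodup_cons.1 hnd).1 (h ▸ hu)
        simp [hui, hdisj u (List.mem_cons_of_mem _ hu)]
      · rw [hcover u]
        simp only [List.mem_cons, Set.mem_insert_iff]
        tauto

end PartialVertexElimination

theorem vertex_elimination_is_iterated_front_elimination_general
    {V : Type*} [Fintype V] [DecidableEq V]
    (A : V → V → Bool) (c : V → V → ℝ)
    (f : V → ℕ) (hacyc : ∀ a b, A a b = true → f a < f b)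
    (j : V) (hpred : ∃ i, A i j = true)
    (l : List V) (hnd : l.Nodup) (hl : ∀ i, i ∈ l ↔ A i j = true)
    (G' : (V → V → Bool) × (V → V → ℝ))
    (hG' : G' = l.foldl (fun p i => (frontAdj p.1 i j, frontLab p.1 p.2 i j)) (A, c)) :
    G'.1 = elimAdj A j ∧
    ∀ x y, elimAdj A j x y = true → G'.2 x y = elimLab A c j x y := by
  have hjj : A j j = false := Bool.eq_false_iff.2 fun h => (hacyc j j h).false
  obtain ⟨i, hi⟩ := hpred
  have hfold := foldl_frontElim_partialElim c hjj (List.ne_nil_of_mem ((hl i).2 hi)) hnd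
    (s := ∅) (by simp) (by simp [hl])
  rw [partialElimAdj_empty, partialElimLab_empty] at hfold
  rw [hG', hfold]
  exact ⟨rfl, fun _ _ _ => rfl⟩

/-- **Vertex elimination is an order-independent sequence of front edge eliminations**:
for an intermediate vertex `j` of an edge-labeled dag `G`, consecutively
front-eliminating the edges `(i₁,j), …, (i_p,j)` for any duplicate-free enumeration
`l = [i₁, …, i_p]` of the predecessor set `P(j)` (each step applied to the graph
produced by the previous one; the removal of `j` and its outgoing edges happens
automatically at the last step) produces exactly the graph `G − j` obtained by vertex
elimination of `j`: the same edge set and the same labels on all its edges.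
In particular, the result is independent of the elimination order. -/
theorem vertex_elimination_is_iterated_front_elimination
    {V : Type*} [Fintype V] [DecidableEq V]
    (A : V → V → Bool) (c : V → V → ℝ)
    (f : V → ℕ) (hacyc : ∀ a b, A a b = true → f a < f b)
    (j : V) (hpred : ∃ i, A i j = true) (hsucc : ∃ k, A j k = true)
    (l : List V) (hnd : l.Nodup) (hl : ∀ i, i ∈ l ↔ A i j = true)
    (G' : (V → V → Bool) × (V → V → ℝ))
    (hG' : G' = l.foldl (fun p i => (frontAdj p.1 i j, frontLab p.1 p.2 i j)) (A, c)) :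
    G'.1 = elimAdj A j ∧
    ∀ x y, elimAdj A j x y = true → G'.2 x y = elimLab A c j x y :=
  vertex_elimination_is_iterated_front_elimination_general A c f hacyc j hpred l hnd hl G' hG'
end

section
/- Let G = (V, E) be a finite directed acyclic graph and let (i,j) ∈ E be an edge whose target j is not a sink and which lies on at least one directed path from a source of G to a sink of G. Let G' be the graph obtained from G by front elimination of (i,j) (the insertion of the structural fill edges (i,k) for all successors k of j for which (i,k) ∉ E, removal of (i,j), and removal of j with its outgoing edges if j loses all incoming edges). Then the quantity Σ_π length(π), where π ranges over all directed paths from a source to a sink and length(π) is the number of edges of π, strictly decreases from G to G'. Consequently, every sequence of edge eliminations terminates after finitely many steps. -/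
open scoped Classical

/-- The 0/1 adjacency matrix over `ℕ`; the entry `(natAdj A ^ k) s t` counts the
directed walks (in a dag: the directed paths) of length `k` from `s` to `t`. -/
def natAdj {V : Type*} [Fintype V] (A : V → V → Bool) : Matrix V V ℕ :=
  fun x y => if A x y then 1 else 0

/-- `Σ_π length(π)`, where `π` ranges over all directed paths from a source to a sink
and `length(π)` is the number of edges of `π`; counted as
`Σ_k k · #{source-to-sink paths of length k}` (in a dag all paths have length
`< card V`). -/
def lengthMeasure {V : Type*} [Fintype V] [DecidableEq V] (A : V → V → Bool) : ℕ :=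
  ∑ k ∈ Finset.Icc 1 (Fintype.card V), k *
    ∑ s ∈ Finset.univ.filter (fun s : V => ∀ u, A u s = false),
      ∑ t ∈ Finset.univ.filter (fun t : V => ∀ w, A t w = false),
        (natAdj A ^ k) s t

/-- An edge-elimination step: front elimination of an edge `(i,j)` whose target is
not a sink and which lies on at least one directed path from a source to a sink. -/
def FrontStep {V : Type*} [Fintype V] [DecidableEq V] (A B : V → V → Bool) : Prop :=
  ∃ i j : V, A i j = true ∧ (∃ k, A j k = true) ∧
    (∃ s t : V, (∀ u, A u s = false) ∧ (∀ w, A t w = false) ∧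
      Relation.ReflTransGen (fun a b => A a b = true) s i ∧
      Relation.ReflTransGen (fun a b => A a b = true) j t) ∧
    B = frontAdj A i j

/-! Route every fill edge `i → y` of a source-to-sink walk of `frontAdj A i j` back through `j`.
This gives an injective, length-nondecreasing map into the source-to-sink walks of `A`: the
detour is undone by contracting `i → j → y`, which is unambiguous because `(i, j)` is no longer
an edge. The endpoints remain a source and a sink of `A`, because every edge that elimination
adds or removes touches `i` or `j`. The walk of `A` through `(i, j)` is not a walk of
`frontAdj A i j`, so it is either missed by the map or the image of a strictly shorter walk;
either way the total length drops. A topological numbering of `A` stays one after each step,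
so the measure decreases along any elimination sequence, which therefore cannot be infinite. -/

def IsTopologicalNumbering {V : Type*} (A : V → V → Bool) (f : V → ℕ) : Prop :=
  ∀ a b, A a b = true → f a < f b

theorem IsTopologicalNumbering.ne {V : Type*} {A : V → V → Bool} {f : V → ℕ}
    (hA : IsTopologicalNumbering A f) {x y : V} (h : A x y = true) : x ≠ y :=
  fun hxy => (hA x y h).ne (congrArg f hxy)

theorem IsTopologicalNumbering.length_le {V : Type*} [Fintype V] {A : V → V → Bool} {f : V → ℕ}
    (hA : IsTopologicalNumbering A f) {l : List V} (hl : l.IsChain (A · ·)) :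
    l.length ≤ Fintype.card V := by
  have hmap : (l.map f).IsChain (· < ·) := List.isChain_map f |>.2 (hl.imp fun a b => hA a b)
  exact (hmap.pairwise.nodup.of_map f).length_le_card

theorem Finset.pairwiseDisjoint_of_key {ι α β : Type*} {s : Finset ι} {F : ι → Finset α}
    (key : α → β) (e : ι → β) (he : Set.InjOn e s) (hkey : ∀ a ∈ s, ∀ x ∈ F a, key x = e a) :
    (s : Set ι).PairwiseDisjoint F := fun a ha b hb hab =>
  Finset.disjoint_left.2 fun x hxa hxb =>
    hab (he ha hb ((hkey a ha x hxa).symm.trans (hkey b hb x hxb)))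

theorem Finset.sum_lt_sum_of_injOn {α β M : Type*} [AddCommMonoid M] [PartialOrder M]
    [IsOrderedCancelAddMonoid M] [CanonicallyOrderedAdd M] {S : Finset α} {T : Finset β}
    {u : α → M} {w : β → M} (Φ : α → β) (hΦ : Set.MapsTo Φ S T) (hinj : Set.InjOn Φ S)
    (hle : ∀ a ∈ S, u a ≤ w (Φ a)) {b : β} (hb : b ∈ T) (hpos : 0 < w b)
    (hlt : ∀ a ∈ S, Φ a = b → u a < w b) : ∑ a ∈ S, u a < ∑ y ∈ T, w y := by
  classical
  have himage : S.image Φ ⊆ T := Finset.image_subset_iff.2 hΦ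
  have hsum : ∑ a ∈ S, w (Φ a) = ∑ y ∈ S.image Φ, w y := (Finset.sum_image hinj).symm
  by_cases hbS : b ∈ S.image Φ
  · obtain ⟨a, ha, rfl⟩ := Finset.mem_image.1 hbS
    calc ∑ a ∈ S, u a < ∑ a ∈ S, w (Φ a) := Finset.sum_lt_sum hle ⟨a, ha, hlt a ha rfl⟩
      _ = ∑ y ∈ S.image Φ, w y := hsum
      _ ≤ ∑ y ∈ T, w y := Finset.sum_le_sum_of_subset himage
  · calc ∑ a ∈ S, u a ≤ ∑ a ∈ S, w (Φ a) := Finset.sum_le_sum hle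
      _ = ∑ y ∈ S.image Φ, w y := hsum
      _ < ∑ y ∈ T, w y :=
        Finset.sum_lt_sum_of_subset himage hb hbS hpos fun _ _ _ => zero_le

theorem List.exists_isChain_of_reflTransGen_of_rel {α : Type*} {R : α → α → Prop} {s i j t : α}
    (hsi : Relation.ReflTransGen R s i) (hij : R i j) (hjt : Relation.ReflTransGen R j t) :
    ∃ l : List α, l.head? = some s ∧ l.getLast? = some t ∧ l.IsChain R ∧ [i, j] <:+: l := by
  obtain ⟨l₁, hc₁, hl₁⟩ := List.exists_isChain_cons_of_relationReflTransGen hsi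
  obtain ⟨l₂, hc₂, hl₂⟩ := List.exists_isChain_cons_of_relationReflTransGen hjt
  have hsplit := List.dropLast_append_getLast (List.cons_ne_nil s l₁)
  rw [hl₁] at hsplit
  refine ⟨(s :: l₁) ++ (j :: l₂), by simp, ?_, List.isChain_append.2 ⟨hc₁, hc₂, ?_⟩, ?_⟩
  · rw [List.getLast?_append_of_ne_nil _ (List.cons_ne_nil j l₂),
      List.getLast?_eq_getLast_of_ne_nil (List.cons_ne_nil j l₂), hl₂]
  · simp only [List.getLast?_eq_getLast_of_ne_nil (List.cons_ne_nil s l₁), hl₁, List.head?_cons,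
      Option.mem_def, Option.some.injEq]
    rintro _ rfl _ rfl
    exact hij
  · rw [← hsplit]
    simpa using List.infix_append (s :: l₁).dropLast [i, j] l₂

theorem List.IsChain.exists_rel_of_head? {α : Type*} {R : α → α → Prop} {l : List α} {s : α}
    (hl : l.IsChain R) (hlen : 2 ≤ l.length) (hs : l.head? = some s) : ∃ y, R s y := by
  match l, hlen with
  | x :: y :: l, _ =>
    obtain rfl : x = s := by simpa using hs
    exact ⟨y, (List.isChain_cons_cons.1 hl).1⟩

theorem List.IsChain.exists_rel_of_getLast? {α : Type*} {R : α → α → Prop} {l : List α} {t : α}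
    (hl : l.IsChain R) (hlen : 2 ≤ l.length) (ht : l.getLast? = some t) : ∃ x, R x t :=
  (List.isChain_reverse.2 hl).exists_rel_of_head? (by simpa using hlen) (by simpa using ht)

section Walks
variable {V : Type*} [Fintype V] [DecidableEq V] (A : V → V → Bool)

def walks : ℕ → V → V → Finset (List V)
  | 0, s, t => if s = t then {[s]} else ∅
  | k + 1, s, t => (Finset.univ.filter (A s ·)).biUnion fun u => (walks k u t).image (s :: ·)

variable {A}

theorem mem_walks {k : ℕ} {s t : V} {l : List V} :
    l ∈ walks A k s t ↔
      l.length = k + 1 ∧ l.head? = some s ∧ l.getLast? = some t ∧ l.IsChain (A · ·) := by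
  induction k generalizing s l with
  | zero =>
    constructor
    · rw [walks]
      split_ifs with hst
      · rintro hl
        rw [Finset.mem_singleton.1 hl, hst]
        exact ⟨rfl, rfl, rfl, .singleton t⟩
      · simp
    · rintro ⟨h1, h2, h3, -⟩
      match l, h1 with
      | [x], _ =>
        obtain ⟨rfl, rfl⟩ : x = s ∧ x = t := by simpa using And.intro h2 h3
        simp [walks]
  | succ k ih =>
    simp only [walks, Finset.mem_biUnion, Finset.mem_filter, Finset.mem_univ, true_and,
      Finset.mem_image, ih]
    constructor
    · rintro ⟨u, hsu, l, ⟨h1, h2, h3, h4⟩, rfl⟩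
      refine ⟨by simp [h1], rfl, by simp [List.getLast?_cons, h3],
        List.isChain_cons.2 ⟨by simpa [h2] using hsu, h4⟩⟩
    · rintro ⟨h1, h2, h3, h4⟩
      match l, h1 with
      | x :: u :: l, h1 =>
        obtain rfl : x = s := by simpa using h2
        rw [List.isChain_cons_cons] at h4
        exact ⟨u, h4.1, u :: l, ⟨by simpa using h1, rfl, by simpa using h3, h4.2⟩, rfl⟩

theorem card_walks (k : ℕ) (s t : V) : (natAdj A ^ k) s t = (walks A k s t).card := by
  induction k generalizing s with
  | zero => simp only [pow_zero, Matrix.one_apply, walks]; split_ifs <;> rfl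
  | succ k ih =>
    rw [pow_succ', Matrix.mul_apply, walks, Finset.card_biUnion, Finset.sum_filter]
    · refine Finset.sum_congr rfl fun u _ => ?_
      by_cases hsu : A s u <;>
        simp [hsu, natAdj, ih, Finset.card_image_of_injective _ List.cons_injective]
    · refine Finset.pairwiseDisjoint_of_key (·.tail.head?) some (Option.some_injective _).injOn
        fun u _ l hl => ?_
      obtain ⟨m, hm, rfl⟩ := Finset.mem_image.1 hl
      exact (mem_walks.1 hm).2.1

end Walks

structure IsSourceSinkWalk {V : Type*} (A : V → V → Bool) (l : List V) : Prop where
  two_le_length : 2 ≤ l.length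
  isChain : l.IsChain (A · ·)
  head_source : ∀ s ∈ l.head?, ∀ u, A u s = false
  last_sink : ∀ t ∈ l.getLast?, ∀ w, A t w = false

section SourceSinkWalks
variable {V : Type*} [Fintype V] [DecidableEq V] {A : V → V → Bool}

variable (A) in
def sourceSinkWalks : Finset (List V) :=
  (Finset.Icc 1 (Fintype.card V)).biUnion fun k =>
    (Finset.univ.filter fun s : V => ∀ u, A u s = false).biUnion fun s =>
      (Finset.univ.filter fun t : V => ∀ w, A t w = false).biUnion fun t => walks A k s t

theorem lengthMeasure_eq_sum : lengthMeasure A = ∑ l ∈ sourceSinkWalks A, (l.length - 1) := by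
  simp only [lengthMeasure, sourceSinkWalks, card_walks]
  rw [Finset.sum_biUnion (Finset.pairwiseDisjoint_of_key List.length (· + 1)
    (add_left_injective 1).injOn ?length)]
  case length =>
    simp only [Finset.mem_biUnion]
    rintro k - l ⟨s, -, t, -, hl⟩
    exact (mem_walks.1 hl).1
  refine Finset.sum_congr rfl fun k _ => ?_
  rw [Finset.sum_biUnion (Finset.pairwiseDisjoint_of_key List.head? some
    (Option.some_injective _).injOn ?head), Finset.mul_sum]
  case head =>
    simp only [Finset.mem_biUnion]
    rintro s - l ⟨t, -, hl⟩
    exact (mem_walks.1 hl).2.1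
  refine Finset.sum_congr rfl fun s _ => ?_
  rw [Finset.sum_biUnion (Finset.pairwiseDisjoint_of_key List.getLast? some
    (Option.some_injective _).injOn fun t _ l hl => (mem_walks.1 hl).2.2.1), Finset.mul_sum]
  refine Finset.sum_congr rfl fun t _ => ?_
  rw [Finset.card_eq_sum_ones, Finset.mul_sum]
  exact Finset.sum_congr rfl fun l hl => by simp [(mem_walks.1 hl).1]

theorem mem_sourceSinkWalks {f : V → ℕ} (hA : IsTopologicalNumbering A f) {l : List V} :
    l ∈ sourceSinkWalks A ↔ IsSourceSinkWalk A l := by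
  simp only [sourceSinkWalks, Finset.mem_biUnion, Finset.mem_Icc, Finset.mem_filter,
    Finset.mem_univ, true_and, mem_walks]
  constructor
  · rintro ⟨k, ⟨hk, -⟩, s, hs, t, ht, hlen, hhead, hlast, hl⟩
    exact ⟨by omega, hl, fun s' hs' => by simp_all, fun t' ht' => by simp_all⟩
  · rintro ⟨hlen, hl, hs, ht⟩
    match l, hlen with
    | x :: y :: l, _ =>
      have hle := hA.length_le hl
      have hlast := List.getLast?_eq_some_getLast (List.cons_ne_nil x (y :: l))
      simp only [List.length_cons] at hle
      exact ⟨l.length + 1, ⟨by omega, by omega⟩, x, hs x rfl, _, ht _ hlast, rfl, rfl, hlast, hl⟩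

end SourceSinkWalks

section FrontAdj
variable {V : Type*} [Fintype V] [DecidableEq V] {A : V → V → Bool} {i j x y : V}

theorem frontAdj_eq_true :
    frontAdj A i j x y = true ↔ ¬(x = i ∧ y = j) ∧ (A x y = true ∨ (x = i ∧ A j y = true)) ∧
      ((∃ u ≠ i, A u j = true) ∨ (x ≠ j ∧ y ≠ j)) := by
  unfold frontAdj
  by_cases hkept : ∃ u ≠ i, A u j = true
  · have : ¬ ∀ u, u ≠ i → A u j = false := by simpa using hkept
    simp only [if_neg this]
    split_ifs <;> simp_all
  · have : ∀ u, u ≠ i → A u j = false := by simpa using hkept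
    simp only [if_pos this, hkept, false_or]
    split_ifs <;> simp_all [and_assoc]

theorem frontAdj_eliminated_eq_false : frontAdj A i j i j = false := by
  simpa using (frontAdj_eq_true (A := A) (x := i) (y := j)).not.2 (by simp)

theorem edge_or_fill_of_frontAdj (h : frontAdj A i j x y = true) :
    A x y = true ∨ (x = i ∧ A j y = true) :=
  (frontAdj_eq_true.1 h).2.1

theorem IsTopologicalNumbering.frontAdj {f : V → ℕ} (hA : IsTopologicalNumbering A f)
    (hij : A i j = true) : IsTopologicalNumbering (frontAdj A i j) f := fun a b h => by
  rcases edge_or_fill_of_frontAdj h with hab | ⟨rfl, hjb⟩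
  · exact hA a b hab
  · exact (hA _ _ hij).trans (hA _ _ hjb)

theorem frontAdj_of_ne (h : A x y = true) (hx : x ≠ j) (hy : y ≠ j) :
    frontAdj A i j x y = true :=
  frontAdj_eq_true.2 ⟨fun h' => hy h'.2, .inl h, .inr ⟨hx, hy⟩⟩

theorem frontAdj_of_exists_other_pred (hkept : ∃ u ≠ i, A u j = true) (h : A x y = true)
    (hxy : ¬(x = i ∧ y = j)) : frontAdj A i j x y = true :=
  frontAdj_eq_true.2 ⟨hxy, .inl h, .inl hkept⟩

theorem frontAdj_fill (hi : i ≠ j) (hy : y ≠ j) (h : A j y = true) :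
    frontAdj A i j i y = true :=
  frontAdj_eq_true.2 ⟨fun h' => hy h'.2, .inr ⟨rfl, h⟩, .inr ⟨hi, hy⟩⟩

theorem exists_other_pred_of_frontAdj (h : frontAdj A i j x y = true) (hxy : x = j ∨ y = j) :
    ∃ u ≠ i, A u j = true := by
  obtain ⟨-, -, hkept | ⟨hx, hy⟩⟩ := frontAdj_eq_true.1 h
  exacts [hkept, (hxy.elim hx hy).elim]

variable {f : V → ℕ} (hA : IsTopologicalNumbering A f) (hij : A i j = true)
include hA hij

theorem exists_frontAdj_into {s w u : V} (hout : frontAdj A i j s w = true)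
    (hu : A u s = true) : ∃ u', frontAdj A i j u' s = true := by
  by_cases hs : s = j
  · obtain ⟨u', hu'i, hu'⟩ := exists_other_pred_of_frontAdj hout (.inl hs)
    exact ⟨u', frontAdj_of_exists_other_pred ⟨u', hu'i, hu'⟩ (hs ▸ hu') fun h => hu'i h.1⟩
  · by_cases huj : u = j
    · subst huj
      exact ⟨i, frontAdj_fill (hA.ne hij) hs hu⟩
    · exact ⟨u, frontAdj_of_ne hu huj hs⟩

theorem exists_frontAdj_from (hnotsink : ∃ k, A j k = true) {u t w : V}
    (hin : frontAdj A i j u t = true) (hw : A t w = true) : ∃ w', frontAdj A i j t w' = true := by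
  by_cases ht : t = j
  · exact ⟨w, frontAdj_of_exists_other_pred (exists_other_pred_of_frontAdj hin (.inr ht)) hw
      fun h => hA.ne hij (h.1.symm.trans ht)⟩
  · by_cases hwj : w = j
    · by_cases hti : t = i
      · obtain ⟨k, hk⟩ := hnotsink
        subst hti
        exact ⟨k, frontAdj_fill (hA.ne hij) (hA.ne hk).symm hk⟩
      · exact ⟨w, frontAdj_of_exists_other_pred ⟨t, hti, hwj ▸ hw⟩ hw fun h => hti h.1⟩
    · exact ⟨w, frontAdj_of_ne hw ht hwj⟩

end FrontAdj

section ExpandFill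
variable {V : Type*} [DecidableEq V] (A : V → V → Bool) (i j : V)

def expandFill : List V → List V
  | x :: y :: l =>
    if x = i ∧ A i y = false then x :: j :: expandFill (y :: l) else x :: expandFill (y :: l)
  | l => l

def contractFill : List V → List V
  | x :: y :: z :: l =>
    if x = i ∧ y = j ∧ A i z = false then x :: contractFill (z :: l)
    else x :: contractFill (y :: z :: l)
  | l => l

variable {A i j}

theorem expandFill_cons_cons {x y : V} {l : List V} :
    expandFill A i j (x :: y :: l) =
      if x = i ∧ A i y = false then x :: j :: expandFill A i j (y :: l)
      else x :: expandFill A i j (y :: l) := by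
  rw [expandFill]

theorem exists_expandFill_cons (x : V) (l : List V) :
    ∃ m, expandFill A i j (x :: l) = x :: m := by
  cases l with
  | nil => exact ⟨[], rfl⟩
  | cons y l => rw [expandFill_cons_cons]; split_ifs <;> exact ⟨_, rfl⟩

theorem head?_expandFill (l : List V) : (expandFill A i j l).head? = l.head? := by
  cases l with
  | nil => rfl
  | cons x l => obtain ⟨m, hm⟩ := exists_expandFill_cons (A := A) (i := i) (j := j) x l; simp [hm]

theorem getLast?_expandFill (l : List V) : (expandFill A i j l).getLast? = l.getLast? := by
  induction l with
  | nil => rfl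
  | cons x l ih =>
    cases l with
    | nil => rfl
    | cons y l =>
      rw [expandFill_cons_cons]
      split_ifs <;> simp [List.getLast?_cons, ih]

theorem length_le_length_expandFill (l : List V) : l.length ≤ (expandFill A i j l).length := by
  induction l with
  | nil => rfl
  | cons x l ih =>
    cases l with
    | nil => rfl
    | cons y l =>
      rw [expandFill_cons_cons]
      split_ifs <;> simp only [List.length_cons] at ih ⊢ <;> omega

theorem expandFill_eq_self_of_length_le {l : List V}
    (h : (expandFill A i j l).length ≤ l.length) : expandFill A i j l = l := by
  induction l with
  | nil => rfl
  | cons x l ih =>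
    cases l with
    | nil => rfl
    | cons y l =>
      have hle := length_le_length_expandFill (A := A) (i := i) (j := j) (y :: l)
      rw [expandFill_cons_cons] at h ⊢
      split_ifs at h ⊢
      · simp only [List.length_cons] at h hle; omega
      · simp only [List.length_cons] at h
        rw [ih (by simpa using h)]

theorem isChain_expandFill {B : V → V → Bool}
    (hB : ∀ x y, B x y = true → A x y = true ∨ (x = i ∧ A j y = true)) (hij : A i j = true)
    {l : List V} (hl : l.IsChain (B · ·)) : (expandFill A i j l).IsChain (A · ·) := by
  induction l with
  | nil => exact .nil
  | cons x l ih =>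
    cases l with
    | nil => exact .singleton x
    | cons y l =>
      rw [List.isChain_cons_cons] at hl
      obtain ⟨m, hm⟩ := exists_expandFill_cons (A := A) (i := i) (j := j) y l
      have hm' := ih hl.2
      rw [hm] at hm'
      rw [expandFill_cons_cons, hm]
      split_ifs with hfill
      · obtain ⟨rfl, hxy⟩ := hfill
        have hjy : A j y = true := by simpa [hxy] using hB _ _ hl.1
        exact .cons_cons hij (.cons_cons hjy hm')
      · have hxy : A x y = true := by
          rcases hB _ _ hl.1 with h | ⟨rfl, h⟩
          · exact h
          · simpa using hfill
        exact .cons_cons hxy hm'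

theorem contractFill_expandFill {R : V → V → Prop} {l : List V} (hl : l.IsChain R)
    (hij : ¬ R i j) : contractFill A i j (expandFill A i j l) = l := by
  induction l with
  | nil => rfl
  | cons x l ih =>
    cases l with
    | nil => rfl
    | cons y l =>
      rw [List.isChain_cons_cons] at hl
      obtain ⟨m, hm⟩ := exists_expandFill_cons (A := A) (i := i) (j := j) y l
      have hm' := ih hl.2
      rw [hm] at hm'
      rw [expandFill_cons_cons, hm]
      split_ifs with hfill
      · rw [contractFill, if_pos ⟨hfill.1, rfl, hfill.2⟩, hm']
      · cases m with
        | nil => simpa [contractFill] using hm'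
        | cons z m =>
          have hxy : ¬(x = i ∧ y = j) := by rintro ⟨rfl, rfl⟩; exact hij hl.1
          rw [contractFill, if_neg fun h => hxy ⟨h.1, h.2.1⟩, hm']

theorem length_lt_length_expandFill {R : V → V → Prop} {l : List V} (hl : l.IsChain R)
    (h : ¬ (expandFill A i j l).IsChain R) : l.length < (expandFill A i j l).length := by
  by_contra hle
  rw [expandFill_eq_self_of_length_le (not_lt.1 hle)] at h
  exact h hl

end ExpandFill

section Elimination
variable {V : Type*} [Fintype V] [DecidableEq V] {A : V → V → Bool} {f : V → ℕ} {i j : V}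
  (hA : IsTopologicalNumbering A f) (hij : A i j = true)
include hA hij

theorem IsSourceSinkWalk.expandFill (hnotsink : ∃ k, A j k = true) {l : List V}
    (hl : IsSourceSinkWalk (frontAdj A i j) l) : IsSourceSinkWalk A (expandFill A i j l) where
  two_le_length := hl.two_le_length.trans (length_le_length_expandFill l)
  isChain := isChain_expandFill (fun _ _ => edge_or_fill_of_frontAdj) hij hl.isChain
  head_source s hs u := by
    rw [head?_expandFill] at hs
    obtain ⟨w, hw⟩ := hl.isChain.exists_rel_of_head? hl.two_le_length hs
    refine Bool.eq_false_iff.2 fun hu => ?_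
    obtain ⟨u', hu'⟩ := exists_frontAdj_into hA hij hw hu
    simp [hl.head_source s hs u'] at hu'
  last_sink t ht w := by
    rw [getLast?_expandFill] at ht
    obtain ⟨u, hu⟩ := hl.isChain.exists_rel_of_getLast? hl.two_le_length ht
    refine Bool.eq_false_iff.2 fun hw => ?_
    obtain ⟨w', hw'⟩ := exists_frontAdj_from hA hij hnotsink hu hw
    simp [hl.last_sink t ht w'] at hw'

theorem lengthMeasure_frontAdj_lt (hnotsink : ∃ k, A j k = true)
    (honpath : ∃ s t : V, (∀ u, A u s = false) ∧ (∀ w, A t w = false) ∧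
      Relation.ReflTransGen (fun a b => A a b = true) s i ∧
      Relation.ReflTransGen (fun a b => A a b = true) j t) :
    lengthMeasure (frontAdj A i j) < lengthMeasure A := by
  obtain ⟨s, t, hs, ht, hsi, hjt⟩ := honpath
  obtain ⟨W, hWs, hWt, hW, hWij⟩ := List.exists_isChain_of_reflTransGen_of_rel hsi hij hjt
  have hWlen : 2 ≤ W.length := hWij.length_le
  have hWwalk : IsSourceSinkWalk A W :=
    ⟨hWlen, hW, fun s' hs' => by simp_all, fun t' ht' => by simp_all⟩
  have hWB : ¬ W.IsChain (frontAdj A i j · ·) := fun h => by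
    simpa [frontAdj_eliminated_eq_false] using List.isChain_pair.1 (h.infix hWij)
  have hB := hA.frontAdj hij
  have hBij : ¬ frontAdj A i j i j = true := by simp [frontAdj_eliminated_eq_false]
  rw [lengthMeasure_eq_sum, lengthMeasure_eq_sum]
  refine Finset.sum_lt_sum_of_injOn (expandFill A i j) (fun l hl => ?_)
    (fun l hl l' hl' h => ?_) (fun l _ => Nat.sub_le_sub_right (length_le_length_expandFill l) 1)
    ((mem_sourceSinkWalks hA).2 hWwalk) (by omega) (fun l hl hlW => ?_)
  · exact (mem_sourceSinkWalks hA).2 (((mem_sourceSinkWalks hB).1 hl).expandFill hA hij hnotsink)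
  · rw [← contractFill_expandFill ((mem_sourceSinkWalks hB).1 hl).isChain hBij, h,
      contractFill_expandFill ((mem_sourceSinkWalks hB).1 hl').isChain hBij]
  · have hl := (mem_sourceSinkWalks hB).1 hl
    subst hlW
    have := length_lt_length_expandFill hl.isChain hWB
    have := hl.two_le_length
    omega

end Elimination

theorem FrontStep.isTopologicalNumbering {V : Type*} [Fintype V] [DecidableEq V]
    {A B : V → V → Bool} {f : V → ℕ} (h : FrontStep A B) (hA : IsTopologicalNumbering A f) :
    IsTopologicalNumbering B f := by
  obtain ⟨i, j, hij, -, -, rfl⟩ := h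
  exact hA.frontAdj hij

theorem FrontStep.lengthMeasure_lt {V : Type*} [Fintype V] [DecidableEq V]
    {A B : V → V → Bool} {f : V → ℕ} (h : FrontStep A B) (hA : IsTopologicalNumbering A f) :
    lengthMeasure B < lengthMeasure A := by
  obtain ⟨i, j, hij, hnotsink, honpath, rfl⟩ := h
  exact lengthMeasure_frontAdj_lt hA hij hnotsink honpath

/-- **Termination measure for edge elimination**: if `(i,j)` is an edge of a finite
dag whose target `j` is not a sink and which lies on a directed path from a source to
a sink, then `Σ_π length(π)` (over all source-to-sink paths `π`) strictly decreases
under front elimination of `(i,j)`.  Consequently, every sequence of such edge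
eliminations terminates after finitely many steps: there is no infinite sequence of
consecutive elimination steps starting from `A`. -/
theorem front_elimination_measure_decreases
    {V : Type*} [Fintype V] [DecidableEq V]
    (A : V → V → Bool)
    (f : V → ℕ) (hacyc : ∀ a b, A a b = true → f a < f b)
    (i j : V) (hij : A i j = true) (hnotsink : ∃ k, A j k = true)
    (honpath : ∃ s t : V, (∀ u, A u s = false) ∧ (∀ w, A t w = false) ∧
      Relation.ReflTransGen (fun a b => A a b = true) s i ∧
      Relation.ReflTransGen (fun a b => A a b = true) j t) :
    lengthMeasure (frontAdj A i j) < lengthMeasure A ∧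
    ∀ seq : ℕ → (V → V → Bool), seq 0 = A →
      ¬ (∀ m : ℕ, FrontStep (seq m) (seq (m + 1))) := by
  refine ⟨lengthMeasure_frontAdj_lt hacyc hij hnotsink honpath, fun seq h0 hstep => ?_⟩
  have hnum : ∀ m, IsTopologicalNumbering (seq m) f := fun m => by
    induction m with
    | zero => exact h0 ▸ hacyc
    | succ m ih => exact (hstep m).isTopologicalNumbering ih
  obtain ⟨m, hm⟩ := WellFounded.not_rel_apply_succ (r := (· < ·)) fun m => lengthMeasure (seq m)
  exact hm ((hstep m).lengthMeasure_lt (hnum m))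
end

section
/- Let H be a vertex-labeled DAG: a finite directed acyclic graph whose intermediate vertices carry labels c(·) ∈ ℝ, with sources and sinks unlabeled. Let (u,v) be an edge of H between two intermediate vertices. Let H' be obtained by the face elimination kernel step: a new vertex w is added with predecessor set P(w) = P(u), successor set S(w) = S(v), and label c(w) = c(v)·c(u); the edge (u,v) is removed; all other vertices, edges and labels are unchanged. Then for every source x and sink y of H, the vertex-labeled path sums agree: J_{H'}(x, y) = J_H(x, y). -/
open scoped Classical

/-- The vertex-labeled path sum `J(x,y)`: the sum over all paths from `x` to `y` of
the product of the labels of the intermediate (interior) vertices of the path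
(an empty sum is `0`). -/
noncomputable def vertexPathSum {α : Type*} (R : α → α → Prop) (lab : α → ℝ)
    (x y : α) : ℝ :=
  ∑' p : {p : List α // IsPath R x y p},
    (((p.1.drop 1).dropLast).map lab).prod


/-! Eliminating the edge `u → v` is undone by expanding the fresh vertex back into the
subpath `u, v`.  This expansion is a bijection from the paths of `H'` onto the paths of `H`
that preserves the product of the interior labels: its inverse contracts every occurrence of
the edge `u → v`, and the result is a path of `H'` because `H` has no edge `v → u` (which
would be needed for two consecutive copies of the fresh vertex).  The endpoints are untouched, since a source is not `u` and a sink is not `v`. -/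

theorem IsPath.eq_cons_append {α : Type*} {R : α → α → Prop} {s t : α} {p : List α}
    (hp : IsPath R s t p) : p = s :: (p.drop 1).dropLast ++ [t] := by
  obtain ⟨hlen, -, hhead, hlast⟩ := hp
  rcases p with _ | ⟨a, q⟩
  · simp at hhead
  obtain rfl : a = s := by simpa using hhead
  have hq : q ≠ [] := by rintro rfl; simp at hlen
  rw [List.getLast?_cons, List.getLast?_eq_some_getLast hq] at hlast
  simpa [← Option.some_inj.mp hlast] using (List.dropLast_append_getLast hq).symm

theorem Option.eq_some_of_map_getD_eq_some {α : Type*} {o : Option (Option α)} {d x : α}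
    (h : o.map (·.getD d) = some x) (hx : x ≠ d) : o = some (some x) := by
  rcases o with _ | _ | a <;> simp_all [eq_comm]

namespace FaceElimination

variable {W : Type*}

/-- The edges of `H'`, with `none` as the fresh vertex `w`. -/
def elimRel (R : W → W → Prop) (u v : W) : Option W → Option W → Prop
  | some a, some b => R a b ∧ ¬(a = u ∧ b = v)
  | some a, none => R a u
  | none, some b => R v b
  | none, none => False

def expand (u v : W) : Option W → List W
  | none => [u, v]
  | some a => [a]

def elimLabel (lab : W → ℝ) (u v : W) (o : Option W) : ℝ :=
  ((expand u v o).map lab).prod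

def contract [DecidableEq W] (u v : W) : List W → List (Option W)
  | [] => []
  | [a] => [some a]
  | a :: b :: rest =>
      if a = u ∧ b = v then none :: contract u v rest else some a :: contract u v (b :: rest)

variable {R : W → W → Prop} {u v x y : W}

lemma head?_flatMap_expand (p : List (Option W)) :
    (p.flatMap (expand u v)).head? = p.head?.map (·.getD u) := by
  rcases p with _ | ⟨_ | a, p⟩ <;> simp [expand]

lemma getLast?_flatMap_expand (p : List (Option W)) :
    (p.flatMap (expand u v)).getLast? = p.getLast?.map (·.getD v) := by
  rcases p.eq_nil_or_concat with rfl | ⟨q, _ | a, rfl⟩ <;> simp [expand]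

lemma length_le_length_flatMap_expand (p : List (Option W)) :
    p.length ≤ (p.flatMap (expand u v)).length := by
  induction p with
  | nil => simp
  | cons o p ih =>
    rw [List.flatMap_cons, List.length_append, List.length_cons]
    cases o <;> simp only [expand, List.length_cons, List.length_nil] <;> omega

lemma prod_map_flatMap_expand (lab : W → ℝ) (p : List (Option W)) :
    ((p.flatMap (expand u v)).map lab).prod = (p.map (elimLabel lab u v)).prod := by
  induction p with
  | nil => simp
  | cons o p ih => simp [ih, elimLabel]

lemma isChain_flatMap_expand (huv : R u v) {p : List (Option W)}
    (hp : p.IsChain (elimRel R u v)) : (p.flatMap (expand u v)).IsChain R := by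
  induction p with
  | nil => simp
  | cons o p ih =>
    rw [List.flatMap_cons]
    refine List.IsChain.append (by cases o <;> simp [expand, huv]) (ih hp.tail) ?_
    intro a ha b hb
    rcases p with _ | ⟨o', p⟩
    · simp at hb
    · have hrel := (List.isChain_cons_cons.mp hp).1
      rw [head?_flatMap_expand] at hb
      rcases o with _ | a' <;> rcases o' with _ | b' <;> simp_all [expand, elimRel]

lemma isPath_flatMap_expand (huv : R u v) {p : List (Option W)}
    (hp : IsPath (elimRel R u v) (some x) (some y) p) : IsPath R x y (p.flatMap (expand u v)) :=
  ⟨hp.1.trans (length_le_length_flatMap_expand p), isChain_flatMap_expand huv hp.2.1,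
    by simp [head?_flatMap_expand, hp.2.2.1], by simp [getLast?_flatMap_expand, hp.2.2.2]⟩

lemma prod_interior_flatMap_expand (lab : W → ℝ) {p : List (Option W)}
    (hp : IsPath (elimRel R u v) (some x) (some y) p) :
    ((((p.flatMap (expand u v)).drop 1).dropLast).map lab).prod
      = (((p.drop 1).dropLast).map (elimLabel lab u v)).prod := by
  rw [hp.eq_cons_append]
  simp [prod_map_flatMap_expand, expand]

variable [DecidableEq W]

lemma contract_cons_of_not (a : W) (r : List W) (h : ¬(a = u ∧ r.head? = some v)) :
    contract u v (a :: r) = some a :: contract u v r := by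
  rcases r with _ | ⟨b, r⟩
  · rfl
  · simp_all [contract]

lemma flatMap_expand_contract (r : List W) : (contract u v r).flatMap (expand u v) = r := by
  induction r using contract.induct u v with
  | case1 => rfl
  | case2 a => rfl
  | case3 a b rest h ih => simp [contract, h, ih, expand]
  | case4 a b rest h ih => simp [contract, h, ih, expand]

lemma head?_contract (r : List W) : (contract u v r).head?.map (·.getD u) = r.head? := by
  simpa [head?_flatMap_expand] using
    congrArg List.head? (flatMap_expand_contract (u := u) (v := v) r)

lemma getLast?_contract (r : List W) :
    (contract u v r).getLast?.map (·.getD v) = r.getLast? := by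
  simpa [getLast?_flatMap_expand] using
    congrArg List.getLast? (flatMap_expand_contract (u := u) (v := v) r)

lemma contract_flatMap_expand (huv : u ≠ v) {p : List (Option W)}
    (hp : p.IsChain (elimRel R u v)) : contract u v (p.flatMap (expand u v)) = p := by
  induction p with
  | nil => rfl
  | cons o p ih =>
    rcases o with _ | a
    · simp [expand, contract, ih hp.tail]
    · rw [List.flatMap_cons, expand, List.singleton_append, contract_cons_of_not, ih hp.tail]
      rw [head?_flatMap_expand]
      rcases p with _ | ⟨_ | b, p⟩
      · simp
      · simp [huv]
      · have := (List.isChain_cons_cons.mp hp).1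
        simp_all [elimRel]

lemma isChain_contract (hvu : ¬R v u) {r : List W} (hr : r.IsChain R) :
    (contract u v r).IsChain (elimRel R u v) := by
  induction r using contract.induct u v with
  | case1 => simp [contract]
  | case2 a => simp [contract]
  | case3 a b rest h ih =>
    obtain ⟨rfl, rfl⟩ := h
    rw [contract, if_pos ⟨rfl, rfl⟩, List.isChain_cons]
    refine ⟨fun o ho => ?_, ih (List.isChain_cons_cons.mp hr).2.tail⟩
    have hhead := head?_contract (u := a) (v := b) rest
    have hrel := (List.isChain_cons.mp (List.isChain_cons_cons.mp hr).2).1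
    rw [ho] at hhead
    rcases o with _ | c <;> simp_all [elimRel]
  | case4 a b rest h ih =>
    rw [contract, if_neg h, List.isChain_cons]
    refine ⟨fun o ho => ?_, ih (List.isChain_cons_cons.mp hr).2⟩
    have hhead := head?_contract (u := u) (v := v) (b :: rest)
    have hrel := (List.isChain_cons_cons.mp hr).1
    rw [ho] at hhead
    rcases o with _ | c <;> simp_all [elimRel]

lemma isPath_contract (hvu : ¬R v u) (hx : x ≠ u) (hy : y ≠ v) {r : List W}
    (hr : IsPath R x y r) : IsPath (elimRel R u v) (some x) (some y) (contract u v r) := by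
  have hhead : (contract u v r).head? = some (some x) :=
    Option.eq_some_of_map_getD_eq_some ((head?_contract r).trans hr.2.2.1) hx
  have hlast : (contract u v r).getLast? = some (some y) :=
    Option.eq_some_of_map_getD_eq_some ((getLast?_contract r).trans hr.2.2.2) hy
  refine ⟨?_, isChain_contract hvu hr.2.1, hhead, hlast⟩
  have hexpand := flatMap_expand_contract (u := u) (v := v) r
  rcases hc : contract u v r with _ | ⟨o, _ | ⟨o', l⟩⟩
  · simp [hc] at hhead
  · simp only [hc, List.head?_cons, Option.some.injEq] at hhead
    have := hr.1
    simp [hc, hhead, expand] at hexpand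
    simp [← hexpand] at this
  · simp

def pathEquiv (huv : R u v) (hvu : ¬R v u) (hx : x ≠ u) (hy : y ≠ v) :
    {p // IsPath (elimRel R u v) (some x) (some y) p} ≃ {r // IsPath R x y r} where
  toFun p := ⟨p.1.flatMap (expand u v), isPath_flatMap_expand huv p.2⟩
  invFun r := ⟨contract u v r.1, isPath_contract hvu hx hy r.2⟩
  left_inv p := Subtype.ext <| contract_flatMap_expand (by rintro rfl; exact hvu huv) p.2.2.1
  right_inv r := Subtype.ext <| flatMap_expand_contract r.1

theorem vertexPathSum_elimRel (huv : R u v) (hvu : ¬R v u) (lab : W → ℝ) (hx : x ≠ u)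
    (hy : y ≠ v) :
    vertexPathSum (elimRel R u v) (elimLabel lab u v) (some x) (some y)
      = vertexPathSum R lab x y := by
  rw [vertexPathSum, vertexPathSum, ← (pathEquiv huv hvu hx hy).tsum_eq]
  exact tsum_congr fun p => (prod_interior_flatMap_expand lab p.2).symm

end FaceElimination

open FaceElimination in
theorem face_elimination_kernel_preserves_path_sums_general
    {W : Type*} [DecidableEq W]
    (B : W → W → Bool) (lab : W → ℝ)
    (f : W → ℕ) (hacyc : ∀ a b, B a b = true → f a < f b)
    (u v : W) (huv : B u v = true)
    (hu : (∃ a, B a u = true) ∧ (∃ b, B u b = true))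
    (hv : (∃ a, B a v = true) ∧ (∃ b, B v b = true))
    (B' : Option W → Option W → Bool) (lab' : Option W → ℝ)
    (hB'ss : ∀ x y : W, B' (some x) (some y) = (B x y && !decide (x = u ∧ y = v)))
    (hB'sn : ∀ x : W, B' (some x) none = B x u)
    (hB'ns : ∀ y : W, B' none (some y) = B v y)
    (hB'nn : B' none none = false)
    (hlab'n : lab' none = lab v * lab u)
    (hlab's : ∀ x : W, lab' (some x) = lab x) :
    ∀ x y : W, (∀ a, B a x = false) → (∀ b, B y b = false) →
      vertexPathSum (fun a b => B' a b = true) lab' (some x) (some y)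
        = vertexPathSum (fun a b => B a b = true) lab x y := by
  intro x y hx hy
  have hB' : (fun a b => B' a b = true) = elimRel (fun a b => B a b = true) u v := by
    funext a b
    rcases a with _ | a <;> rcases b with _ | b <;>
      simp [elimRel, hB'ss, hB'sn, hB'ns, hB'nn, imp_iff_not_or]
  have hlab' : lab' = elimLabel lab u v := by
    funext o
    rcases o with _ | a <;> simp [elimLabel, expand, hlab'n, hlab's, mul_comm]
  have hvu : B v u ≠ true := fun h => lt_asymm (hacyc u v huv) (hacyc v u h)
  have hxu : x ≠ u := by
    rintro rfl
    obtain ⟨a, ha⟩ := hu.1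
    simp [hx a] at ha
  have hyv : y ≠ v := by
    rintro rfl
    obtain ⟨b, hb⟩ := hv.2
    simp [hy b] at hb
  rw [hB', hlab']
  exact vertexPathSum_elimRel (R := fun a b => B a b = true) huv hvu lab hxu hyv

/-- **The face elimination kernel step preserves path sums.**
`H` is a vertex-labeled dag (adjacency `B`, labels `lab`, acyclic via a topological
order `f`), and `(u,v)` is an edge between two intermediate vertices.  `H'` (on
`Option W`, the fresh vertex being `none`) is obtained by adding a new vertex `w`
with `P(w) = P(u)`, `S(w) = S(v)` and label `lab v * lab u`, and removing the edge
`(u,v)`; everything else is unchanged.  Then for every source `x` and sink `y` of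
`H`, `J_{H'}(x,y) = J_H(x,y)`. -/
theorem face_elimination_kernel_preserves_path_sums
    {W : Type*} [Fintype W] [DecidableEq W]
    (B : W → W → Bool) (lab : W → ℝ)
    (f : W → ℕ) (hacyc : ∀ a b, B a b = true → f a < f b)
    (u v : W) (huv : B u v = true)
    (hu : (∃ a, B a u = true) ∧ (∃ b, B u b = true))
    (hv : (∃ a, B a v = true) ∧ (∃ b, B v b = true))
    (B' : Option W → Option W → Bool) (lab' : Option W → ℝ)
    (hB'ss : ∀ x y : W, B' (some x) (some y) = (B x y && !decide (x = u ∧ y = v)))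
    (hB'sn : ∀ x : W, B' (some x) none = B x u)
    (hB'ns : ∀ y : W, B' none (some y) = B v y)
    (hB'nn : B' none none = false)
    (hlab'n : lab' none = lab v * lab u)
    (hlab's : ∀ x : W, lab' (some x) = lab x) :
    ∀ x y : W, (∀ a, B a x = false) → (∀ b, B y b = false) →
      vertexPathSum (fun a b => B' a b = true) lab' (some x) (some y)
        = vertexPathSum (fun a b => B a b = true) lab x y :=
  face_elimination_kernel_preserves_path_sums_general B lab f hacyc u v huv hu hv B' lab' hB'ss
    hB'sn hB'ns hB'nn hlab'n hlab's
end

section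
/- Let H be a vertex-labeled DAG and let u ≠ v be two intermediate vertices with identical predecessor sets, P(u) = P(v), and identical successor sets, S(u) = S(v). Let H' be obtained by merging u and v: the vertex v and all edges incident to v are removed, and the label of u is replaced by c(u) + c(v). Then for every source x and sink y of H, the vertex-labeled path sums agree: J_{H'}(x, y) = J_H(x, y). -/
open scoped Classical

namespace List

variable {α β : Type*} {R : α → α → Prop} {l : List α}

theorem isChain_and_forall_iff {P : α → Prop} (hl : 2 ≤ l.length) :
    l.IsChain (fun a b => R a b ∧ P a ∧ P b) ↔ l.IsChain R ∧ ∀ a ∈ l, P a := by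
  induction l using List.twoStepInduction with
  | nil => simp at hl
  | singleton => simp at hl
  | cons_cons a b t _ ih =>
    cases t with
    | nil => simp
    | cons c t =>
      rw [isChain_cons_cons, isChain_cons_cons (R := R), ih b (by simp)]
      simp only [mem_cons, forall_eq_or_imp]
      tauto

theorem IsChain.pairwise_of_lt [Preorder β] (f : α → β) (hf : ∀ a b, R a b → f a < f b)
    (h : l.IsChain R) : l.Pairwise (fun a b => f a < f b) :=
  isChain_iff_pairwise.1 (h.imp hf)

theorem IsChain.nodup_of_lt_s9 [Preorder β] (f : α → β) (hf : ∀ a b, R a b → f a < f b)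
    (h : l.IsChain R) : l.Nodup :=
  (h.pairwise_of_lt f hf).imp fun h => ne_of_apply_ne f h.ne

/-- `f` increases along both `l` and `l.map σ`, which would force `f u < f v` and `f v < f u`. -/
theorem IsChain.notMem_of_swap [Preorder β] (f : α → β) (hf : ∀ a b, R a b → f a < f b)
    {σ : α → α} (hσ : ∀ a b, R a b → R (σ a) (σ b)) {u v : α} (hu : σ u = v) (hv : σ v = u)
    (huv : u ≠ v) (hl : l.IsChain R) (hul : u ∈ l) : v ∉ l := by
  intro hvl
  let S a b := (f a < f b ∧ f (σ a) < f (σ b)) ∨ (f b < f a ∧ f (σ b) < f (σ a))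
  have : Std.Symm S := ⟨fun _ _ => Or.symm⟩
  have hS : l.Pairwise S :=
    ((hl.pairwise_of_lt f hf).and ((hl.imp hσ).pairwise_of_lt (f ∘ σ) fun _ _ => hf _ _)).imp
      Or.inl
  rcases hS.forall hul hvl huv with ⟨h, h'⟩ | ⟨h, h'⟩ <;> simp only [hu, hv] at h' <;>
    exact lt_asymm h h'

theorem prod_map_update_add [DecidableEq α] {M : Type*} [CommSemiring M] (hl : l.Nodup) {u : α}
    (hu : u ∈ l) (g : α → M) (c d : M) :
    (l.map (Function.update g u (c + d))).prod
      = (l.map (Function.update g u c)).prod + (l.map (Function.update g u d)).prod := by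
  simp only [← prod_toFinset _ hl, Finset.prod_update_of_mem (mem_toFinset.2 hu), add_mul]

end List

theorem rel_swap_apply_iff {α : Type*} [DecidableEq α] {R : α → α → Prop} {u v : α}
    (hP : ∀ a, R a u ↔ R a v) (hS : ∀ b, R u b ↔ R v b) (a b : α) :
    R (Equiv.swap u v a) (Equiv.swap u v b) ↔ R a b := by
  simp only [Equiv.swap_apply_def]
  split_ifs <;> simp_all

section Paths

variable {α : Type*} {R : α → α → Prop} {x y : α} {p : List α}

theorem IsPath.isChain_s9 (hp : IsPath R x y p) : p.IsChain R := hp.2.1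

theorem IsPath.map {β : Type*} {S : β → β → Prop} (g : α → β)
    (hg : ∀ a b, R a b → S (g a) (g b)) (hp : IsPath R x y p) : IsPath S (g x) (g y) (p.map g) := by
  obtain ⟨hl, hc, hh, ht⟩ := hp
  exact ⟨by simpa using hl, List.isChain_map_of_isChain g hg hc, by simp [hh], by simp [ht]⟩

theorem isPath_and_forall_iff {P : α → Prop} :
    IsPath (fun a b => R a b ∧ P a ∧ P b) x y p ↔ IsPath R x y p ∧ ∀ a ∈ p, P a := by
  unfold IsPath
  constructor
  · rintro ⟨hl, hc, hh, ht⟩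
    have := (List.isChain_and_forall_iff hl).1 hc
    exact ⟨⟨hl, this.1, hh, ht⟩, this.2⟩
  · rintro ⟨⟨hl, hc, hh, ht⟩, hP⟩
    exact ⟨hl, (List.isChain_and_forall_iff hl).2 ⟨hc, hP⟩, hh, ht⟩

theorem setOf_isPath_finite [Fintype α] {β : Type*} [Preorder β] (f : α → β)
    (hf : ∀ a b, R a b → f a < f b) (x y : α) : {p | IsPath R x y p}.Finite :=
  (List.finite_length_le α (Fintype.card α)).subset fun _ hp =>
    (hp.isChain_s9.nodup_of_lt_s9 f hf).length_le_card

def pathInterior (p : List α) : List α := (p.drop 1).dropLast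

theorem pathInterior_map {β : Type*} (g : α → β) (p : List α) :
    pathInterior (p.map g) = (pathInterior p).map g := by
  simp [pathInterior]

theorem pathInterior_sublist (p : List α) : (pathInterior p).Sublist p :=
  (List.dropLast_sublist _).trans (List.drop_sublist 1 p)

theorem IsPath.mem_pathInterior_iff {w : α} (hp : IsPath R x y p) (hwx : w ≠ x) (hwy : w ≠ y) :
    w ∈ pathInterior p ↔ w ∈ p := by
  refine ⟨fun h => (pathInterior_sublist p).subset h, fun hw => ?_⟩
  obtain ⟨hl, -, hh, ht⟩ := hp
  rcases p with _ | ⟨a, t⟩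
  · simp at hh
  · simp only [List.head?_cons, Option.some.injEq] at hh
    subst hh
    simp only [pathInterior, List.drop_one, List.tail_cons]
    grind [List.mem_dropLast_of_mem_of_ne_getLast?]

theorem vertexPathSum_eq_sum (lab : α → ℝ) (s : Finset (List α))
    (hs : ∀ p, p ∈ s ↔ IsPath R x y p) :
    vertexPathSum R lab x y = ∑ p ∈ s, ((pathInterior p).map lab).prod := by
  have : IsPath R x y = (· ∈ s) := funext fun p => propext (hs p).symm
  unfold vertexPathSum
  rw [this]
  exact Finset.tsum_subtype s fun p => ((pathInterior p).map lab).prod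

end Paths

section Swap

variable {α : Type*} [DecidableEq α] {u v : α}

theorem List.prod_map_update_add_swap {M : Type*} [CommSemiring M] {l : List α} (hl : l.Nodup)
    (hv : v ∉ l) (g : α → M) :
    (l.map (Function.update g u (g u + g v))).prod
      = (l.map g).prod + if u ∈ l then ((l.map (Equiv.swap u v)).map g).prod else 0 := by
  split_ifs with hu
  · rw [List.prod_map_update_add hl hu, Function.update_eq_self, List.map_map]
    congr 2
    refine List.map_congr_left fun w hw => ?_
    by_cases hwu : w = u
    · simp [hwu]
    · simp [Function.update_of_ne hwu,
        Equiv.swap_apply_of_ne_of_ne hwu (ne_of_mem_of_not_mem hw hv)]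
  · rw [add_zero]
    congr 1
    exact List.map_congr_left fun w hw => Function.update_of_ne (ne_of_mem_of_not_mem hw hu) _ _

variable {R : α → α → Prop}

theorem IsPath.prod_map_update_add_swap {x y : α} {p : List α} {β : Type*} [Preorder β]
    (f : α → β) (hf : ∀ a b, R a b → f a < f b) (hxu : x ≠ u) (hyu : y ≠ u) (hvp : v ∉ p)
    (hp : IsPath R x y p) (lab : α → ℝ) :
    ((pathInterior p).map (Function.update lab u (lab u + lab v))).prod
      = ((pathInterior p).map lab).prod
        + if u ∈ p then ((pathInterior (p.map (Equiv.swap u v))).map lab).prod else 0 := by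
  have hnodup := (pathInterior_sublist p).nodup (hp.isChain_s9.nodup_of_lt_s9 f hf)
  have hv : v ∉ pathInterior p := fun h => hvp ((pathInterior_sublist p).subset h)
  simp only [List.prod_map_update_add_swap hnodup hv, hp.mem_pathInterior_iff hxu.symm hyu.symm,
    pathInterior_map]

theorem IsPath.map_swap {x y : α} {p : List α}
    (hσ : ∀ a b, R a b → R (Equiv.swap u v a) (Equiv.swap u v b))
    (hxu : x ≠ u) (hxv : x ≠ v) (hyu : y ≠ u) (hyv : y ≠ v) (hp : IsPath R x y p) :
    IsPath R x y (p.map (Equiv.swap u v)) := by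
  simpa [Equiv.swap_apply_of_ne_of_ne, *] using hp.map _ hσ

theorem Finset.sum_filter_map_swap {M β : Type*} [AddCommMonoid M] [Preorder β] (f : α → β)
    (hf : ∀ a b, R a b → f a < f b) (hσ : ∀ a b, R a b → R (Equiv.swap u v a) (Equiv.swap u v b))
    (huv : u ≠ v) {T : Finset (List α)} (hT : ∀ p ∈ T, p.IsChain R)
    (hTσ : ∀ p ∈ T, p.map (Equiv.swap u v) ∈ T) (F : List α → M) :
    ∑ p ∈ T with v ∉ p ∧ u ∈ p, F (p.map (Equiv.swap u v)) = ∑ p ∈ T with v ∈ p, F p := by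
  have mem_map_swap {a b : α} {p : List α} (h : Equiv.swap u v b = a) :
      a ∈ p.map (Equiv.swap u v) ↔ b ∈ p := by
    subst h
    simp [List.mem_map]
  refine Finset.sum_nbij' (List.map (Equiv.swap u v)) (List.map (Equiv.swap u v)) ?_ ?_ ?_ ?_
    fun _ _ => rfl
  · simp only [Finset.mem_filter]
    rintro p ⟨hp, -, hup⟩
    exact ⟨hTσ p hp, (mem_map_swap (Equiv.swap_apply_left u v)).2 hup⟩
  · simp only [Finset.mem_filter]
    rintro p ⟨hp, hvp⟩
    refine ⟨hTσ p hp, ?_, (mem_map_swap (Equiv.swap_apply_right u v)).2 hvp⟩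
    rw [mem_map_swap (Equiv.swap_apply_left u v)]
    exact (hT p hp).notMem_of_swap f hf hσ (Equiv.swap_apply_right u v)
      (Equiv.swap_apply_left u v) huv.symm hvp
  all_goals intro p _; simp [List.map_map, Function.comp_def]

theorem vertexPathSum_merge [Fintype α] {β : Type*} [Preorder β] (f : α → β)
    (hf : ∀ a b, R a b → f a < f b) (huv : u ≠ v) (hP : ∀ a, R a u ↔ R a v)
    (hS : ∀ b, R u b ↔ R v b) {x y : α} (hxu : x ≠ u) (hxv : x ≠ v) (hyu : y ≠ u) (hyv : y ≠ v)
    (lab : α → ℝ) :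
    vertexPathSum (fun a b => R a b ∧ a ≠ v ∧ b ≠ v) (Function.update lab u (lab u + lab v)) x y
      = vertexPathSum R lab x y := by
  have hσ a b : R a b → R (Equiv.swap u v a) (Equiv.swap u v b) :=
    (rel_swap_apply_iff hP hS a b).2
  set T := (setOf_isPath_finite f hf x y).toFinset
  have hT : ∀ p, p ∈ T ↔ IsPath R x y p := by simp [T]
  have hT' : ∀ p, p ∈ T.filter (v ∉ ·) ↔ IsPath (fun a b => R a b ∧ a ≠ v ∧ b ≠ v) x y p := by
    simp [hT, isPath_and_forall_iff, List.forall_mem_ne']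
  rw [vertexPathSum_eq_sum _ _ hT', vertexPathSum_eq_sum _ _ hT]
  set F : List α → ℝ := fun p => ((pathInterior p).map lab).prod
  calc ∑ p ∈ T with v ∉ p, ((pathInterior p).map (Function.update lab u (lab u + lab v))).prod
      = ∑ p ∈ T with v ∉ p, (F p + if u ∈ p then F (p.map (Equiv.swap u v)) else 0) := by
        refine Finset.sum_congr rfl fun p hp => ?_
        obtain ⟨hpT, hvp⟩ := Finset.mem_filter.1 hp
        exact ((hT p).1 hpT).prod_map_update_add_swap f hf hxu hyu hvp lab
    _ = ∑ p ∈ T with v ∉ p, F p + ∑ p ∈ T with v ∈ p, F p := by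
      rw [Finset.sum_add_distrib, ← Finset.sum_filter, Finset.filter_filter,
        Finset.sum_filter_map_swap f hf hσ huv (fun p hp => ((hT p).1 hp).isChain_s9)
          (fun p hp => (hT _).2 (((hT p).1 hp).map_swap hσ hxu hxv hyu hyv))]
    _ = ∑ p ∈ T, F p := Finset.sum_filter_not_add_sum_filter _ _ _

end Swap

/-- **Merging preserves path sums.**  `H` is a vertex-labeled dag and `u ≠ v` are two
intermediate vertices with `P(u) = P(v)` and `S(u) = S(v)`.  `H'` is obtained by
merging `u` and `v`: the vertex `v` is removed (isolated) together with all its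
incident edges, and the label of `u` becomes `lab u + lab v`.  Then for every source
`x` and sink `y` of `H`, `J_{H'}(x,y) = J_H(x,y)`. -/
theorem merging_preserves_path_sums
    {W : Type*} [Fintype W] [DecidableEq W]
    (B : W → W → Bool) (lab : W → ℝ)
    (f : W → ℕ) (hacyc : ∀ a b, B a b = true → f a < f b)
    (u v : W) (huv : u ≠ v)
    (hu : (∃ a, B a u = true) ∧ (∃ b, B u b = true))
    (hv : (∃ a, B a v = true) ∧ (∃ b, B v b = true))
    (hP : ∀ x, B x u = B x v) (hS : ∀ y, B u y = B v y)
    (B' : W → W → Bool) (lab' : W → ℝ)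
    (hB' : ∀ x y, B' x y = (B x y && !decide (x = v) && !decide (y = v)))
    (hlab' : ∀ x, lab' x = if x = u then lab u + lab v else lab x) :
    ∀ x y : W, (∀ a, B a x = false) → (∀ b, B y b = false) →
      vertexPathSum (fun a b => B' a b = true) lab' x y
        = vertexPathSum (fun a b => B a b = true) lab x y := by
  intro x y hx hy
  have hxu : x ≠ u := by rintro rfl; obtain ⟨a, ha⟩ := hu.1; simp [hx a] at ha
  have hxv : x ≠ v := by rintro rfl; obtain ⟨a, ha⟩ := hv.1; simp [hx a] at ha
  have hyu : y ≠ u := by rintro rfl; obtain ⟨b, hb⟩ := hu.2; simp [hy b] at hb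
  have hyv : y ≠ v := by rintro rfl; obtain ⟨b, hb⟩ := hv.2; simp [hy b] at hb
  have hB'_eq : (fun a b => B' a b = true) = fun a b => B a b = true ∧ a ≠ v ∧ b ≠ v := by
    funext a b
    simp [hB', and_assoc]
  have hlab'_eq : lab' = Function.update lab u (lab u + lab v) := by
    funext a
    simp [hlab', Function.update_apply]
  rw [hB'_eq, hlab'_eq]
  exact vertexPathSum_merge f hacyc huv (fun a => by rw [hP]) (fun b => by rw [hS])
    hxu hxv hyu hyv lab
end

section
/- Let v_{1-n}, …, v_0 be the components of x ∈ ℝ^n and v_j = f_j((v_i)_{i≺j}) for j = 1, …, q be a single assignment code with differentiable elementals f_j and acyclic dependence relation ≺. Fix x ∈ ℝ^n and a tangent seed ẋ ∈ ℝ^n, and define scalars v̇_j recursively by v̇_i = ẋ_{i+n} for input indices i ∈ {1−n, …, 0} and v̇_j = Σ_{i≺j} (∂f_j/∂v_i)·v̇_i for j = 1, …, q, where the elemental partial derivatives are evaluated at the intermediate values determined by x. Then for every j, v̇_j equals the directional derivative of the function x ↦ v_j(x) at x in direction ẋ, i.e., v̇_j = Σ_{s=1−n}^{0} (∂v_j/∂x_s)(x)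 · ẋ_{s+n}. -/
open scoped Classical

/-- **Correctness of scalar tangent mode of algorithmic differentiation.**
A single assignment code has inputs `v_{1-n}, …, v_0` (indices `0, …, n-1` of
`Fin (n+q)`) and intermediate values `v_j = f_j((v_i)_{i ≺ j})` for `j = 1, …, q`
(indices `n, …, n+q-1`), with differentiable elementals and acyclic dependence
relation (`i ≺ j → i < j`).  Fix `x` and a tangent seed `ẋ`, and propagate tangents:
`v̇_i = ẋ_i` for inputs and `v̇_j = Σ_{i≺j} (∂f_j/∂v_i)·v̇_i` otherwise, partials
evaluated at the intermediate values determined by `x`.  Then for every `j`, `v̇_j`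
is the directional derivative of `x ↦ v_j(x)` at `x` in direction `ẋ`:
`v̇_j = Σ_s (∂v_j/∂x_s)(x)·ẋ_s`. -/
theorem tangent_mode_correct
    (n q : ℕ) (prec : Fin (n + q) → Fin (n + q) → Prop)
    (hord : ∀ i j, prec i j → i < j)
    (hmin : ∀ i j : Fin (n + q), prec i j → n ≤ j.val)
    (f : Fin (n + q) → (Fin (n + q) → ℝ) → ℝ)
    (hdiff : ∀ j : Fin (n + q), n ≤ j.val → Differentiable ℝ (f j))
    (hdep : ∀ j : Fin (n + q), n ≤ j.val → ∀ u u' : Fin (n + q) → ℝ,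
      (∀ i, prec i j → u i = u' i) → f j u = f j u')
    (v : (Fin n → ℝ) → Fin (n + q) → ℝ)
    (hvin : ∀ (x : Fin n → ℝ) (j : Fin (n + q)) (h : j.val < n), v x j = x ⟨j.val, h⟩)
    (hvrec : ∀ (x : Fin n → ℝ) (j : Fin (n + q)), n ≤ j.val → v x j = f j (v x))
    (x dx : Fin n → ℝ) (dv : Fin (n + q) → ℝ)
    (hdvin : ∀ (j : Fin (n + q)) (h : j.val < n), dv j = dx ⟨j.val, h⟩)
    (hdvrec : ∀ j : Fin (n + q), n ≤ j.val →
      dv j = ∑ i ∈ Finset.univ.filter (fun i => prec i j),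
        fderiv ℝ (f j) (v x) (Pi.single i 1) * dv i) :
    ∀ j : Fin (n + q),
      dv j = ∑ s : Fin n, fderiv ℝ (fun x : Fin n → ℝ => v x j) x (Pi.single s 1) * dx s := by
  classical
  suffices H : ∀ N : ℕ, ∀ j : Fin (n + q), j.val < N →
      Differentiable ℝ (fun x : Fin n → ℝ => v x j) ∧
      dv j = ∑ s : Fin n,
        fderiv ℝ (fun x : Fin n → ℝ => v x j) x (Pi.single s 1) * dx s by
    intro j
    exact (H (n + q) j j.isLt).2
  -- linearity helper
  have hlin : ∀ {m : ℕ} (L : (Fin m → ℝ) →L[ℝ] ℝ) (w : Fin m → ℝ),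
      L w = ∑ i, L (Pi.single i 1) * w i := by
    intro m L w
    have hw : w = ∑ i, w i • (Pi.single i 1 : Fin m → ℝ) := by
      have := (Finset.univ_sum_single w).symm
      rw [this]
      congr 1
      funext i
      funext t
      by_cases h : t = i <;> simp [Pi.single_apply, h]
    conv_lhs => rw [hw]
    rw [map_sum]
    refine Finset.sum_congr rfl fun i _ => ?_
    rw [map_smul]
    simp [mul_comm]
  intro N
  induction N with
  | zero => intro j h; omega
  | succ N IH =>
    intro j hj
    by_cases hn : j.val < n
    · -- input variable
      have he : (fun x : Fin n → ℝ => v x j) = fun x => x ⟨j.val, hn⟩ :=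
        funext fun y => hvin y j hn
      constructor
      · rw [he]; exact differentiable_apply _
      · rw [he, hdvin j hn]
        have hfd : ∀ s : Fin n,
            fderiv ℝ (fun x : Fin n → ℝ => x ⟨j.val, hn⟩) x (Pi.single s 1)
              = (Pi.single s 1 : Fin n → ℝ) ⟨j.val, hn⟩ := by
          intro s
          have hh : HasFDerivAt (fun y : Fin n → ℝ => y ⟨j.val, hn⟩)
              (ContinuousLinearMap.proj (⟨j.val, hn⟩ : Fin n) :
                (Fin n → ℝ) →L[ℝ] ℝ) x :=
            hasFDerivAt_apply (⟨j.val, hn⟩ : Fin n) x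
          rw [hh.fderiv]
          rfl
        simp only [hfd]
        rw [Finset.sum_congr rfl (fun s _ => by
          rw [Pi.single_apply])]
        simp
    · -- intermediate variable
      push_neg at hn
      have hIH : ∀ i : Fin (n + q), prec i j →
          Differentiable ℝ (fun x : Fin n → ℝ => v x i) ∧
          dv i = ∑ s : Fin n,
            fderiv ℝ (fun x : Fin n → ℝ => v x i) x (Pi.single s 1) * dx s := by
        intro i hi
        have : i.val < j.val := hord i j hi
        exact IH i (by omega)
      set P : (Fin (n + q) → ℝ) →L[ℝ] (Fin (n + q) → ℝ) :=
        ContinuousLinearMap.pi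
          (fun i => if prec i j then ContinuousLinearMap.proj i else 0) with hPdef
      have hP : ∀ u i, P u i = if prec i j then u i else 0 := by
        intro u i
        rw [hPdef, ContinuousLinearMap.pi_apply]
        split_ifs <;> simp
      have hfp : ∀ u, f j u = f j (P u) := by
        intro u
        refine hdep j hn u (P u) fun i hi => ?_
        rw [hP]; simp [hi]
      have hDf : ∀ u d, fderiv ℝ (f j) u d = fderiv ℝ (f j) (P u) (P d) := by
        intro u d
        have h1 : HasFDerivAt (fun u => f j (P u))
            ((fderiv ℝ (f j) (P u)).comp P) u :=
          ((hdiff j hn (P u)).hasFDerivAt).comp u P.hasFDerivAt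
        have h2 : HasFDerivAt (f j) ((fderiv ℝ (f j) (P u)).comp P) u :=
          h1.congr_of_eventuallyEq (Filter.Eventually.of_forall hfp)
        rw [h2.fderiv]; rfl
      set V : (Fin n → ℝ) → Fin (n + q) → ℝ :=
        fun y i => if prec i j then v y i else 0 with hVdef
      have hVcoord : ∀ i, Differentiable ℝ (fun y : Fin n → ℝ => V y i) := by
        intro i
        by_cases hi : prec i j
        · simpa [hVdef, hi] using (hIH i hi).1
        · simpa [hVdef, hi] using differentiable_const (0 : ℝ)
      have hVd : Differentiable ℝ V := differentiable_pi.2 hVcoord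
      have hVP : ∀ y, V y = P (v y) := by
        intro y; funext i; rw [hP]
      have hvj : (fun y : Fin n → ℝ => v y j) = fun y => f j (V y) := by
        funext y
        rw [hvrec y j hn, hVP, hfp]
      have hdj : Differentiable ℝ (fun y : Fin n → ℝ => v y j) := by
        rw [hvj]
        exact (hdiff j hn).comp hVd
      refine ⟨hdj, ?_⟩
      -- compute the directional derivatives of v · j
      have hfd : ∀ s : Fin n,
          fderiv ℝ (fun y : Fin n → ℝ => v y j) x (Pi.single s 1)
            = ∑ i : Fin (n + q),
                fderiv ℝ (f j) (V x) (Pi.single i 1)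
                  * fderiv ℝ (fun y => V y i) x (Pi.single s 1) := by
        intro s
        rw [hvj]
        have hc : fderiv ℝ (fun y => f j (V y)) x
            = (fderiv ℝ (f j) (V x)).comp (fderiv ℝ V x) :=
          fderiv_comp x (hdiff j hn (V x)) (hVd x)
        rw [hc, ContinuousLinearMap.comp_apply, hlin]
        refine Finset.sum_congr rfl fun i _ => ?_
        congr 1
        have : fderiv ℝ V x = ContinuousLinearMap.pi
            (fun i => fderiv ℝ (fun y => V y i) x) :=
          fderiv_pi (fun i => (hVcoord i) x)
        rw [this, ContinuousLinearMap.pi_apply]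
      -- partials of f j at V x agree with those at v x on predecessors
      have hPf : ∀ i : Fin (n + q), prec i j →
          fderiv ℝ (f j) (V x) (Pi.single i 1)
            = fderiv ℝ (f j) (v x) (Pi.single i 1) := by
        intro i hi
        have h1 : P (Pi.single i 1) = Pi.single i (1 : ℝ) := by
          funext t
          rw [hP]
          by_cases ht : prec t j
          · simp [ht]
          · have : t ≠ i := fun h => ht (h ▸ hi)
            simp [ht, Pi.single_apply, this]
        rw [hDf (v x) (Pi.single i 1), h1, ← hVP]
      -- coordinate derivatives of V
      have hVi : ∀ (i : Fin (n + q)) (s : Fin n),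
          fderiv ℝ (fun y => V y i) x (Pi.single s 1)
            = if prec i j then fderiv ℝ (fun y => v y i) x (Pi.single s 1)
              else 0 := by
        intro i s
        by_cases hi : prec i j
        · simp only [hVdef, hi, if_true]
        · simp [hVdef, hi]
      rw [hdvrec j hn]
      have hswap : ∑ s : Fin n,
          fderiv ℝ (fun y : Fin n → ℝ => v y j) x (Pi.single s 1) * dx s
          = ∑ i ∈ Finset.univ.filter (fun i => prec i j),
              fderiv ℝ (f j) (v x) (Pi.single i 1)
                * ∑ s : Fin n,
                    fderiv ℝ (fun y => v y i) x (Pi.single s 1) * dx s := by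
        simp only [hfd, hVi, Finset.sum_mul]
        rw [Finset.sum_comm]
        rw [← Finset.sum_filter_add_sum_filter_not Finset.univ (fun i => prec i j)]
        have hz : ∑ i ∈ Finset.univ.filter (fun i => ¬ prec i j),
            ∑ s : Fin n, fderiv ℝ (f j) (V x) (Pi.single i 1)
              * (if prec i j then fderiv ℝ (fun y => v y i) x (Pi.single s 1) else 0)
              * dx s = 0 := by
          refine Finset.sum_eq_zero fun i hi => ?_
          rw [Finset.mem_filter] at hi
          refine Finset.sum_eq_zero fun s _ => ?_
          simp [hi.2]
        rw [hz, add_zero]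
        refine Finset.sum_congr rfl fun i hi => ?_
        rw [Finset.mem_filter] at hi
        rw [Finset.mul_sum]
        refine Finset.sum_congr rfl fun s _ => ?_
        rw [hPf i hi.2]
        simp [hi.2]
        ring
      rw [hswap]
      refine Finset.sum_congr rfl fun i hi => ?_
      rw [Finset.mem_filter] at hi
      rw [(hIH i hi.2).2]
end

section
/- Let v_{1-n}, …, v_0 be the components of x ∈ ℝ^n and v_j = f_j((v_i)_{i≺j}) for j = 1, …, q be a single assignment code with differentiable elementals f_j and acyclic dependence relation ≺, in which the output indices Y = {q−m+1, …, q} are exactly the maximal elements of ≺. Fix x ∈ ℝ^n and an adjoint seed ȳ ∈ ℝ^m, and define scalars v̄_j in reverse topological order by v̄_t = ȳ_{t−q+m} for t ∈ Y and v̄_j = Σ_{k : j≺k} v̄_k·(∂f_k/∂v_j) for all other j, where the elemental partial derivatives are evaluated at the intermediate values determined by x. Then for every input index s ∈ {1−n, …, 0}, v̄_s = Σ_{t∈Y} ȳ_{t−q+m} · (∂v_t/∂x_s)(x), i.e., the reverse sweep computes x̄ = ȳ·F'(x). -/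
open scoped Classical

/-- **Correctness of scalar adjoint mode of algorithmic differentiation.**
A single assignment code has inputs `v_{1-n}, …, v_0` (indices `0, …, n-1` of
`Fin (n+q)`) and intermediate values `v_j = f_j((v_i)_{i ≺ j})` for `j = 1, …, q`
(indices `n, …, n+q-1`), with differentiable elementals and acyclic dependence
relation (`i ≺ j → i < j`).  The output indices `Y = {q−m+1, …, q}` (indices
`n+q-m, …, n+q-1`) are exactly the maximal elements of `≺`.  Fix `x` and an adjoint
seed `ȳ`, and propagate adjoints in reverse order: `v̄_t = ȳ_t` for outputs and
`v̄_j = Σ_{k : j≺k} v̄_k·(∂f_k/∂v_j)` for all other `j`, partials evaluated at the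
intermediate values determined by `x`.  Then for every input index `s`,
`v̄_s = Σ_{t∈Y} ȳ_t·(∂v_t/∂x_s)(x)`, i.e. the reverse sweep computes `x̄ = ȳ·F'(x)`. -/
theorem adjoint_mode_correct
    (n q m : ℕ) (hm : m ≤ q)
    (prec : Fin (n + q) → Fin (n + q) → Prop)
    (hord : ∀ i j, prec i j → i < j)
    (hmin : ∀ i j : Fin (n + q), prec i j → n ≤ j.val)
    (hmax : ∀ j : Fin (n + q), (∀ k, ¬ prec j k) ↔ n + (q - m) ≤ j.val)
    (f : Fin (n + q) → (Fin (n + q) → ℝ) → ℝ)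
    (hdiff : ∀ j : Fin (n + q), n ≤ j.val → Differentiable ℝ (f j))
    (hdep : ∀ j : Fin (n + q), n ≤ j.val → ∀ u u' : Fin (n + q) → ℝ,
      (∀ i, prec i j → u i = u' i) → f j u = f j u')
    (v : (Fin n → ℝ) → Fin (n + q) → ℝ)
    (hvin : ∀ (x : Fin n → ℝ) (j : Fin (n + q)) (h : j.val < n), v x j = x ⟨j.val, h⟩)
    (hvrec : ∀ (x : Fin n → ℝ) (j : Fin (n + q)), n ≤ j.val → v x j = f j (v x))
    (x : Fin n → ℝ) (ybar : Fin m → ℝ) (bv : Fin (n + q) → ℝ)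
    (hbvout : ∀ (t : Fin (n + q)) (h : n + (q - m) ≤ t.val),
      bv t = ybar ⟨t.val - (n + (q - m)), by have := t.isLt; omega⟩)
    (hbvrec : ∀ j : Fin (n + q), j.val < n + (q - m) →
      bv j = ∑ k ∈ Finset.univ.filter (fun k => prec j k),
        bv k * fderiv ℝ (f k) (v x) (Pi.single j 1)) :
    ∀ (s : Fin (n + q)) (hs : s.val < n),
      bv s = ∑ t : Fin m,
        ybar t *
          fderiv ℝ (fun x : Fin n → ℝ =>
              v x ⟨n + (q - m) + t.val, by have := t.isLt; omega⟩)
            x (Pi.single ⟨s.val, hs⟩ 1) := by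
  intro s hs
  classical
  set e : Fin n → ℝ := Pi.single ⟨s.val, hs⟩ 1 with he
  set w : Fin (n + q) → ℝ := fun j => fderiv ℝ (fun y => v y j) x e with hw
  set c : Fin (n + q) → Fin (n + q) → ℝ :=
    fun i j => fderiv ℝ (f j) (v x) (Pi.single i 1) with hc
  -- Step 1: each coordinate map is differentiable
  have hdv : ∀ j : Fin (n + q), Differentiable ℝ (fun y => v y j) := by
    have H : ∀ M : ℕ, ∀ j : Fin (n + q), j.val < M → Differentiable ℝ (fun y => v y j) := by
      intro M
      induction M with
      | zero => intro j h; omega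
      | succ M ih =>
        intro j hj
        by_cases hjn : j.val < n
        · have hEq : (fun y : Fin n → ℝ => v y j) = fun y => y ⟨j.val, hjn⟩ :=
            funext fun y => hvin y j hjn
          rw [hEq]
          exact (ContinuousLinearMap.proj (R := ℝ) (φ := fun _ : Fin n => ℝ)
            (⟨j.val, hjn⟩ : Fin n)).differentiable
        · push_neg at hjn
          have hEq : (fun y : Fin n → ℝ => v y j)
              = fun y => f j (fun i => if prec i j then v y i else 0) := by
            funext y
            rw [hvrec y j hjn]
            exact hdep j hjn _ _ fun i hi => by simp [hi]
          rw [hEq]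
          refine Differentiable.comp (hdiff j hjn) ?_
          rw [differentiable_pi]
          intro i
          by_cases hij : prec i j
          · have hij' : i.val < j.val := Fin.lt_def.mp (hord i j hij)
            simpa [hij] using ih i (by omega)
          · simpa [hij] using differentiable_const (0 : ℝ)
    intro j; exact H (j.val + 1) j (Nat.lt_succ_self _)
  -- Step 2: tangents of input coordinates
  have hwin : ∀ (i : Fin (n + q)) (hi : i.val < n), w i = e ⟨i.val, hi⟩ := by
    intro i hi
    have hEq : (fun y : Fin n → ℝ => v y i) = fun y => y ⟨i.val, hi⟩ :=
      funext fun y => hvin y i hi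
    have h2 : (fun y : Fin n → ℝ => y ⟨i.val, hi⟩)
        = ⇑(ContinuousLinearMap.proj (R := ℝ) (φ := fun _ : Fin n => ℝ) ⟨i.val, hi⟩) := rfl
    rw [hw]
    simp only [hEq, h2, ContinuousLinearMap.fderiv]
    rfl
  -- Step 3: chain rule (forward tangent recurrence)
  have hchain : ∀ j : Fin (n + q), n ≤ j.val →
      w j = ∑ i ∈ Finset.univ.filter (fun i => prec i j), c i j * w i := by
    intro j hj
    set P : (Fin (n + q) → ℝ) →L[ℝ] (Fin (n + q) → ℝ) :=
      ContinuousLinearMap.pi (fun i => if prec i j then ContinuousLinearMap.proj i else 0)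
      with hPdef
    have hPapp : ∀ (u : Fin (n + q) → ℝ) i, P u i = if prec i j then u i else 0 := by
      intro u i
      simp only [hPdef, ContinuousLinearMap.pi_apply]
      split <;> simp
    have hfcomp : f j = (f j) ∘ ⇑P :=
      funext fun u => hdep j hj u (P u) fun i hi => by rw [hPapp]; simp [hi]
    have hpart : ∀ p : Fin (n + q) → ℝ, (∀ i, prec i j → p i = v x i) →
        ∀ i, prec i j →
          fderiv ℝ (f j) p (Pi.single i 1) = fderiv ℝ (f j) (v x) (Pi.single i 1) := by
      intro p hp i hi
      have hPsingle : P (Pi.single i (1:ℝ)) = Pi.single i 1 := by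
        funext k
        rw [hPapp]
        by_cases hk : k = i
        · subst hk; simp [hi]
        · simp [Pi.single_eq_of_ne hk]
      have key : ∀ p' : Fin (n + q) → ℝ,
          fderiv ℝ (f j) p' (Pi.single i 1) = fderiv ℝ (f j) (P p') (Pi.single i 1) := by
        intro p'
        conv_lhs => rw [hfcomp]
        rw [fderiv_comp p' ((hdiff j hj) (P p')) (P.differentiableAt),
          ContinuousLinearMap.comp_apply, ContinuousLinearMap.fderiv, hPsingle]
      have hPp : P p = P (v x) := by
        funext k
        rw [hPapp, hPapp]
        by_cases hk : prec k j <;> simp [hk]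
        exact hp k hk
      rw [key p, key (v x), hPp]
    have hEq : (fun y : Fin n → ℝ => v y j)
        = (f j) ∘ (fun y => fun i => if prec i j then v y i else 0) := by
      funext y
      rw [Function.comp_apply, hvrec y j hj]
      exact hdep j hj _ _ fun i hi => by simp [hi]
    have hginner : ∀ i : Fin (n + q),
        DifferentiableAt ℝ (fun y : Fin n → ℝ => if prec i j then v y i else 0) x := by
      intro i
      by_cases hij : prec i j
      · simpa [hij] using (hdv i).differentiableAt
      · simpa [hij] using differentiableAt_const (0 : ℝ)
    have hgdiff : DifferentiableAt ℝ
        (fun y : Fin n → ℝ => fun i => if prec i j then v y i else 0) x :=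
      differentiableAt_pi.mpr hginner
    have hfd : w j = fderiv ℝ (f j) (fun i => if prec i j then v x i else 0)
        ((fderiv ℝ (fun y : Fin n → ℝ => fun i => if prec i j then v y i else 0) x) e) := by
      rw [hw]
      show fderiv ℝ (fun y => v y j) x e = _
      rw [hEq, fderiv_comp x ((hdiff j hj) _) hgdiff]
      rfl
    have hvec : (fderiv ℝ (fun y : Fin n → ℝ => fun i => if prec i j then v y i else 0) x) e
        = ∑ i ∈ Finset.univ.filter (fun i => prec i j), w i • (Pi.single i 1 : Fin (n + q) → ℝ) := by
      rw [fderiv_pi hginner]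
      funext k
      rw [ContinuousLinearMap.pi_apply, Finset.sum_apply]
      have hterm : ∀ i : Fin (n + q),
          (w i • (Pi.single i 1 : Fin (n + q) → ℝ)) k = if k = i then w i else 0 := by
        intro i
        simp [Pi.single_apply]
      simp only [hterm]
      rw [Finset.sum_ite_eq (Finset.univ.filter (fun i => prec i j)) k (fun i => w i)]
      by_cases hk : prec k j
      · simp only [Finset.mem_filter, Finset.mem_univ, true_and, hk, if_true, hw]
      · simp only [Finset.mem_filter, Finset.mem_univ, true_and, hk, if_false]
        simp [hk, fderiv_const_apply]
    rw [hfd, hvec, map_sum]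
    refine Finset.sum_congr rfl fun i hi => ?_
    have hij : prec i j := (Finset.mem_filter.mp hi).2
    rw [map_smul]
    have hp : ∀ i', prec i' j → (if prec i' j then v x i' else 0) = v x i' := fun i' h => by
      simp [h]
    rw [hpart (fun i => if prec i j then v x i else 0) (fun i' h => by simp [h]) i hij]
    rw [smul_eq_mul, hc, mul_comm]
  -- Step 4: summation by parts
  set A : Finset (Fin (n + q)) := Finset.univ.filter (fun j => n ≤ j.val) with hA
  set B : Finset (Fin (n + q)) := Finset.univ.filter (fun j => j.val < n + (q - m)) with hB
  have hdouble : ∑ j ∈ A, bv j * w j = ∑ i ∈ B, bv i * w i := by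
    have step1 : ∑ j ∈ A, bv j * w j
        = ∑ j : Fin (n + q), ∑ i : Fin (n + q),
            if prec i j then bv j * (c i j * w i) else 0 := by
      rw [← Finset.sum_subset (Finset.subset_univ A) ?_]
      · refine Finset.sum_congr rfl fun j hj => ?_
        rw [hchain j (Finset.mem_filter.mp hj).2, Finset.mul_sum, Finset.sum_filter]
      · intro j _ hjA
        have hjn : j.val < n := by
          by_contra h
          exact hjA (Finset.mem_filter.mpr ⟨Finset.mem_univ j, by omega⟩)
        refine Finset.sum_eq_zero fun i hi => ?_
        have : ¬ prec i j := fun h => by have := hmin i j h; omega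
        simp [this]
    have step2 : ∑ j : Fin (n + q), ∑ i : Fin (n + q),
          (if prec i j then bv j * (c i j * w i) else 0)
        = ∑ i : Fin (n + q),
            (∑ j ∈ Finset.univ.filter (fun k => prec i k), bv j * c i j) * w i := by
      rw [Finset.sum_comm]
      refine Finset.sum_congr rfl fun i _ => ?_
      rw [Finset.sum_mul, Finset.sum_filter]
      refine Finset.sum_congr rfl fun j _ => ?_
      by_cases hij : prec i j <;> simp [hij] <;> ring
    have step3 : ∑ i : Fin (n + q),
          (∑ j ∈ Finset.univ.filter (fun k => prec i k), bv j * c i j) * w i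
        = ∑ i ∈ B, bv i * w i := by
      rw [← Finset.sum_subset (Finset.subset_univ B) ?_]
      · refine Finset.sum_congr rfl fun i hi => ?_
        have hiB : i.val < n + (q - m) := (Finset.mem_filter.mp hi).2
        rw [← hbvrec i hiB]
      · intro i _ hiB
        have hin : n + (q - m) ≤ i.val := by
          by_contra h
          exact hiB (Finset.mem_filter.mpr ⟨Finset.mem_univ i, by omega⟩)
        have hnone : ∀ k, ¬ prec i k := (hmax i).mpr hin
        have : Finset.univ.filter (fun k => prec i k) = ∅ := by
          refine Finset.filter_eq_empty_iff.mpr fun k _ => hnone k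
        rw [this, Finset.sum_empty, zero_mul]
    rw [step1, step2, step3]
  -- Step 5: cancel the common intermediate part
  have hsplitA : ∑ j ∈ A, bv j * w j
      = (∑ j ∈ A.filter (fun j => j.val < n + (q - m)), bv j * w j)
        + ∑ j ∈ A.filter (fun j => ¬ j.val < n + (q - m)), bv j * w j :=
    (Finset.sum_filter_add_sum_filter_not A _ _).symm
  have hsplitB : ∑ j ∈ B, bv j * w j
      = (∑ j ∈ B.filter (fun j => n ≤ j.val), bv j * w j)
        + ∑ j ∈ B.filter (fun j => ¬ n ≤ j.val), bv j * w j :=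
    (Finset.sum_filter_add_sum_filter_not B _ _).symm
  have hABBA : A.filter (fun j => j.val < n + (q - m)) = B.filter (fun j => n ≤ j.val) := by
    ext j
    simp only [hA, hB, Finset.mem_filter, Finset.mem_univ, true_and]
    omega
  have hkey : ∑ j ∈ A.filter (fun j => ¬ j.val < n + (q - m)), bv j * w j
      = ∑ j ∈ B.filter (fun j => ¬ n ≤ j.val), bv j * w j := by
    have := hdouble
    rw [hsplitA, hsplitB, hABBA] at this
    linarith
  have hYset : A.filter (fun j => ¬ j.val < n + (q - m))
      = Finset.univ.filter (fun j : Fin (n + q) => n + (q - m) ≤ j.val) := by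
    ext j
    simp only [hA, Finset.mem_filter, Finset.mem_univ, true_and]
    omega
  have hIset : B.filter (fun j => ¬ n ≤ j.val)
      = Finset.univ.filter (fun j : Fin (n + q) => j.val < n) := by
    ext j
    simp only [hB, Finset.mem_filter, Finset.mem_univ, true_and]
    omega
  -- input side equals bv s
  have hinput : ∑ j ∈ Finset.univ.filter (fun j : Fin (n + q) => j.val < n), bv j * w j
      = bv s := by
    rw [Finset.sum_eq_single_of_mem s (Finset.mem_filter.mpr ⟨Finset.mem_univ s, hs⟩)]
    · rw [hwin s hs, he]
      simp
    · intro i hi hne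
      have hin : i.val < n := (Finset.mem_filter.mp hi).2
      rw [hwin i hin, he]
      have : (⟨i.val, hin⟩ : Fin n) ≠ ⟨s.val, hs⟩ := by
        intro h
        rw [Fin.mk.injEq] at h
        exact hne (Fin.ext h)
      rw [Pi.single_eq_of_ne this, mul_zero]
  -- output side equals the goal sum
  have houtput : ∑ j ∈ Finset.univ.filter (fun j : Fin (n + q) => n + (q - m) ≤ j.val),
        bv j * w j
      = ∑ t : Fin m, ybar t * w ⟨n + (q - m) + t.val, by have := t.isLt; omega⟩ := by
    have hj2m : ∀ j : Fin (n + q), n + (q - m) ≤ j.val → j.val - (n + (q - m)) < m := by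
      intro j hj; have := j.isLt; omega
    refine Finset.sum_bij'
      (fun j hj => (⟨j.val - (n + (q - m)),
        hj2m j (Finset.mem_filter.mp hj).2⟩ : Fin m))
      (fun t _ => (⟨n + (q - m) + t.val, by have := t.isLt; omega⟩ : Fin (n + q)))
      ?_ ?_ ?_ ?_ ?_
    · intro a ha; exact Finset.mem_univ _
    · intro a _
      exact Finset.mem_filter.mpr ⟨Finset.mem_univ _, by dsimp only; omega⟩
    · intro a ha
      have h1 : n + (q - m) ≤ a.val := (Finset.mem_filter.mp ha).2
      exact Fin.ext (by dsimp only; omega)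
    · intro a _
      exact Fin.ext (by dsimp only; omega)
    · intro a ha
      have h1 : n + (q - m) ≤ a.val := (Finset.mem_filter.mp ha).2
      rw [hbvout a h1]
      dsimp only
      have h2 : (⟨n + (q - m) + (a.val - (n + (q - m))), by have := a.isLt; omega⟩
          : Fin (n + q)) = a := Fin.ext (by dsimp only; omega)
      rw [h2]
  calc bv s = ∑ j ∈ Finset.univ.filter (fun j : Fin (n + q) => j.val < n), bv j * w j :=
        hinput.symm
    _ = ∑ j ∈ Finset.univ.filter (fun j : Fin (n + q) => n + (q - m) ≤ j.val), bv j * w j := by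
        rw [← hYset, ← hIset, hkey]
    _ = ∑ t : Fin m, ybar t * w ⟨n + (q - m) + t.val, by have := t.isLt; omega⟩ := houtput
    _ = _ := rfl
end
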